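/- Assume Assumption 1 (continuity) and fix β ∈ (0,K). Then H attains its minimum over Δ, and for any minimizer (λ*,γ*) of H over Δ, the β-specific oracle Γ*_β(x,s) := {k ∈ [K] : p_k(x,s) ≥ λ* + γ*_{k,s}/π_s} solves the constrained problem min{R(Γ) : Γ ∈ 𝚪 is DP-fair and 𝒯(Γ) ≤ β}; that is, Γ*_β is DP-fair, 𝒯(Γ*_β) ≤ β, and R(Γ*_β) ≤ R(Γ) for every DP-fair Γ ∈ 𝚪 with 𝒯(Γ) ≤ β. -/

import Mathlib

open MeasureTheory Set Filter

noncomputable section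

section Defs

variable {𝒳 𝒮 : Type*} [MeasurableSpace 𝒳] [MeasurableSpace 𝒮] {K : ℕ}

/-- `π_s := ℙ(S = s)`. -/
def probS (μ : Measure (𝒳 × 𝒮 × Fin K)) (s : 𝒮) : ℝ :=
  (μ {ω | ω.2.1 = s}).toReal

/-- `ℙ(A | S = s) := ℙ(A ∩ {S = s}) / π_s`. -/
def condProb (μ : Measure (𝒳 × 𝒮 × Fin K)) (A : Set (𝒳 × 𝒮 × Fin K)) (s : 𝒮) : ℝ :=
  (μ (A ∩ {ω | ω.2.1 = s})).toReal / probS μ s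

/-- Conditional expectation `E[f(X,S,Y) | S = s]`. -/
def condMean (μ : Measure (𝒳 × 𝒮 × Fin K)) (f : 𝒳 × 𝒮 × Fin K → ℝ) (s : 𝒮) : ℝ :=
  (∫ ω in {ω : 𝒳 × 𝒮 × Fin K | ω.2.1 = s}, f ω ∂μ) / probS μ s

/-- The event `{k ∈ Γ(X,S)}`. -/
def memEvent (Γ : 𝒳 → 𝒮 → Set (Fin K)) (k : Fin K) : Set (𝒳 × 𝒮 × Fin K) :=
  {ω | k ∈ Γ ω.1 ω.2.1}

/-- A set-valued classifier: each membership set is measurable. -/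
def IsClassifier (Γ : 𝒳 → 𝒮 → Set (Fin K)) : Prop :=
  ∀ k : Fin K, MeasurableSet {q : 𝒳 × 𝒮 | k ∈ Γ q.1 q.2}

/-- Risk `R(Γ) := ℙ(Y ∉ Γ(X,S))`. -/
def risk (μ : Measure (𝒳 × 𝒮 × Fin K)) (Γ : 𝒳 → 𝒮 → Set (Fin K)) : ℝ :=
  (μ {ω | ω.2.2 ∉ Γ ω.1 ω.2.1}).toReal

/-- Expected size `𝒯(Γ) := E[|Γ(X,S)|]`. -/
def expSize (μ : Measure (𝒳 × 𝒮 × Fin K)) (Γ : 𝒳 → 𝒮 → Set (Fin K)) : ℝ :=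
  ∫ ω, ((Γ ω.1 ω.2.1).ncard : ℝ) ∂μ

/-- Demographic parity: `ℙ(k ∈ Γ(X,S) | S = s) = ℙ(k ∈ Γ(X,S))` for all `k, s`. -/
def DPfair (μ : Measure (𝒳 × 𝒮 × Fin K)) (Γ : 𝒳 → 𝒮 → Set (Fin K)) : Prop :=
  ∀ (k : Fin K) (s : 𝒮), condProb μ (memEvent Γ k) s = (μ (memEvent Γ k)).toReal

/-- Unfairness measure `𝒰(Γ)`. -/
def unfairness (μ : Measure (𝒳 × 𝒮 × Fin K)) (Γ : 𝒳 → 𝒮 → Set (Fin K)) : ℝ :=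
  ⨆ k : Fin K, ⨆ s : 𝒮, ⨆ s' : 𝒮,
    |condProb μ (memEvent Γ k) s - condProb μ (memEvent Γ k) s'|

/-- Conditional cdf `F_{k,s}(t) := ℙ(p_k(X,S) ≤ t | S = s)`. -/
def Fks (μ : Measure (𝒳 × 𝒮 × Fin K)) (p : Fin K → 𝒳 → 𝒮 → ℝ) (k : Fin K) (s : 𝒮) (t : ℝ) : ℝ :=
  condProb μ {ω | p k ω.1 ω.2.1 ≤ t} s

/-- cdf `F_k(t) := ℙ(p_k(X,S) ≤ t)`. -/
def Fk (μ : Measure (𝒳 × 𝒮 × Fin K)) (p : Fin K → 𝒳 → 𝒮 → ℝ) (k : Fin K) (t : ℝ) : ℝ :=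
  (μ {ω | p k ω.1 ω.2.1 ≤ t}).toReal

/-- `G(t) := Σ_k (1 - F_k(t))`. -/
def Gfun (μ : Measure (𝒳 × 𝒮 × Fin K)) (p : Fin K → 𝒳 → 𝒮 → ℝ) (t : ℝ) : ℝ :=
  ∑ k : Fin K, (1 - Fk μ p k t)

/-- Assumption 1 (continuity of all the conditional cdfs `F_{k,s}`). -/
def Assumption1 (μ : Measure (𝒳 × 𝒮 × Fin K)) (p : Fin K → 𝒳 → 𝒮 → ℝ) : Prop :=
  ∀ (k : Fin K) (s : 𝒮), Continuous (fun t => Fks μ p k s t)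

/-- Thresholding (oracle) classifier `{k : p_k(x,s) ≥ λ + γ_{k,s}/π_s}`. -/
def oracle (μ : Measure (𝒳 × 𝒮 × Fin K)) (p : Fin K → 𝒳 → 𝒮 → ℝ)
    (lam : ℝ) (γ : Fin K → 𝒮 → ℝ) : 𝒳 → 𝒮 → Set (Fin K) :=
  fun x s => {k | lam + γ k s / probS μ s ≤ p k x s}

/-- The objective `H(λ,γ)`. -/
def Hfun [Fintype 𝒮] (μ : Measure (𝒳 × 𝒮 × Fin K)) (p : Fin K → 𝒳 → 𝒮 → ℝ) (β : ℝ)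
    (lam : ℝ) (γ : Fin K → 𝒮 → ℝ) : ℝ :=
  (∑ k : Fin K, ∑ s : 𝒮,
      condMean μ (fun ω => max (probS μ s * (p k ω.1 ω.2.1 - lam) - γ k s) 0) s) + lam * β

/-- Lagrangian risk `R_{λ,γ}(Γ)`. -/
def lagRisk [Fintype 𝒮] (μ : Measure (𝒳 × 𝒮 × Fin K)) (β lam : ℝ) (γ : Fin K → 𝒮 → ℝ)
    (Γ : 𝒳 → 𝒮 → Set (Fin K)) : ℝ :=
  risk μ Γ + lam * (expSize μ Γ - β) +
    ∑ k : Fin K, ∑ s : 𝒮, γ k s * condProb μ (memEvent Γ k) s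

end Defs

/-- Generalized inverse `h⁻¹(u) := inf {t | h t ≤ u}` of a nonincreasing function. -/
def ginv (h : ℝ → ℝ) (u : ℝ) : ℝ := sInf {t | h t ≤ u}

/-- The constraint set `Δ`. -/
def Δset (K : ℕ) (𝒮 : Type*) [Fintype 𝒮] : Set (ℝ × (Fin K → 𝒮 → ℝ)) :=
  {q | 0 ≤ q.1 ∧ ∀ k : Fin K, ∑ s : 𝒮, q.2 k s = 0}


section Aux

set_option linter.unusedSectionVars false

open MeasureTheory

variable {𝒳 𝒮 : Type*} [MeasurableSpace 𝒳] [MeasurableSpace 𝒮] [MeasurableSingletonClass 𝒮]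
  [Fintype 𝒮] {K : ℕ}

lemma measurable_projXS : Measurable (fun ω : 𝒳 × 𝒮 × Fin K => (ω.1, ω.2.1)) :=
  measurable_fst.prodMk (measurable_fst.comp measurable_snd)

lemma measSs (s : 𝒮) : MeasurableSet {ω : 𝒳 × 𝒮 × Fin K | ω.2.1 = s} :=
  (measurable_fst.comp measurable_snd) (measurableSet_singleton s)

lemma measMemEvent {Γ : 𝒳 → 𝒮 → Set (Fin K)} (hΓ : IsClassifier Γ) (k : Fin K) :
    MeasurableSet (memEvent Γ k) := measurable_projXS (hΓ k)

lemma integrable_of_bdd (μ : Measure (𝒳 × 𝒮 × Fin K)) [IsFiniteMeasure μ]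
    {f : 𝒳 × 𝒮 × Fin K → ℝ} (hf : Measurable f) (C : ℝ) (hC : ∀ ω, |f ω| ≤ C) :
    Integrable f μ :=
  (integrable_const C).mono' hf.aestronglyMeasurable
    (Filter.Eventually.of_forall (by simpa using hC))

lemma pairwise_disjoint_S (T : Set (𝒳 × 𝒮 × Fin K)) :
    Pairwise (Function.onFun Disjoint (fun s : 𝒮 => T ∩ {ω | ω.2.1 = s})) := by
  intro s s' hss'
  refine Set.disjoint_left.mpr ?_
  rintro ω ⟨-, h1⟩ ⟨-, h2⟩
  exact hss' ((h1 : ω.2.1 = s) ▸ (h2 : ω.2.1 = s'))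

lemma union_S (T : Set (𝒳 × 𝒮 × Fin K)) :
    (⋃ s : 𝒮, T ∩ {ω | ω.2.1 = s}) = T := by
  ext ω; simp

lemma integral_eq_sum_S (μ : Measure (𝒳 × 𝒮 × Fin K)) [IsFiniteMeasure μ]
    {f : 𝒳 × 𝒮 × Fin K → ℝ} (hf : Integrable f μ) (T : Set (𝒳 × 𝒮 × Fin K))
    (hT : MeasurableSet T) :
    ∫ ω in T, f ω ∂μ = ∑ s : 𝒮, ∫ ω in T ∩ {ω | ω.2.1 = s}, f ω ∂μ := by
  have h := integral_iUnion (μ := μ) (f := f)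
    (s := fun s : 𝒮 => T ∩ {ω | ω.2.1 = s})
    (fun s => hT.inter (measSs s)) (pairwise_disjoint_S T)
    (by rw [union_S]; exact hf.integrableOn)
  rw [union_S] at h
  rw [h, tsum_fintype]

lemma meas_eq_sum_S (μ : Measure (𝒳 × 𝒮 × Fin K)) [IsFiniteMeasure μ]
    (T : Set (𝒳 × 𝒮 × Fin K)) (hT : MeasurableSet T) :
    (μ T).toReal = ∑ s : 𝒮, (μ (T ∩ {ω | ω.2.1 = s})).toReal := by
  have h := measure_iUnion (μ := μ) (pairwise_disjoint_S T)
    (fun s => hT.inter (measSs s))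
  rw [union_S] at h
  rw [h, tsum_fintype, ENNReal.toReal_sum (fun s _ => measure_ne_top μ _)]

lemma ncard_eq_sum_real (A : Set (Fin K)) :
    ((A.ncard : ℝ)) = ∑ k : Fin K, Set.indicator A (fun _ => (1:ℝ)) k := by
  classical
  rw [Set.ncard_eq_toFinset_card' A]
  rw [show A.toFinset = Finset.univ.filter (· ∈ A) by ext k; simp]
  rw [Finset.card_filter]
  push_cast
  refine Finset.sum_congr rfl fun k _ => ?_
  simp [Set.indicator_apply]

lemma expSize_eq_sum (μ : Measure (𝒳 × 𝒮 × Fin K)) [IsFiniteMeasure μ]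
    {Γ : 𝒳 → 𝒮 → Set (Fin K)} (hΓ : IsClassifier Γ) :
    expSize μ Γ = ∑ k : Fin K, (μ (memEvent Γ k)).toReal := by
  classical
  have h1 : ∀ ω : 𝒳 × 𝒮 × Fin K, ((Γ ω.1 ω.2.1).ncard : ℝ)
      = ∑ k : Fin K, Set.indicator (memEvent Γ k) (fun _ => (1:ℝ)) ω := by
    intro ω
    rw [ncard_eq_sum_real]
    refine Finset.sum_congr rfl fun k _ => ?_
    simp only [Set.indicator_apply, memEvent, Set.mem_setOf_eq]
  unfold expSize
  rw [integral_congr_ae (Filter.Eventually.of_forall h1), integral_finset_sum]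
  · refine Finset.sum_congr rfl fun k _ => ?_
    rw [integral_indicator_const (1:ℝ) (measMemEvent hΓ k)]
    simp [measureReal_def]
  · exact fun k _ => (integrable_const (1:ℝ)).indicator (measMemEvent hΓ k)


lemma measYk (k : Fin K) : MeasurableSet {ω : 𝒳 × 𝒮 × Fin K | ω.2.2 = k} :=
  (measurable_snd.comp measurable_snd) (measurableSet_singleton k)

lemma risk_eq (μ : Measure (𝒳 × 𝒮 × Fin K)) [IsProbabilityMeasure μ]
    (p : Fin K → 𝒳 → 𝒮 → ℝ)
    (hlink : ∀ (k : Fin K) (A : Set (𝒳 × 𝒮)), MeasurableSet A →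
      (μ {ω | ω.2.2 = k ∧ (ω.1, ω.2.1) ∈ A}).toReal
        = ∫ ω in {ω : 𝒳 × 𝒮 × Fin K | (ω.1, ω.2.1) ∈ A}, p k ω.1 ω.2.1 ∂μ)
    {Γ : 𝒳 → 𝒮 → Set (Fin K)} (hΓ : IsClassifier Γ) :
    risk μ Γ = 1 - ∑ k : Fin K, ∫ ω in memEvent Γ k, p k ω.1 ω.2.1 ∂μ := by
  have hEk : ∀ k, MeasurableSet (memEvent Γ (K := K) k) := measMemEvent hΓ
  have hcup : {ω : 𝒳 × 𝒮 × Fin K | ω.2.2 ∈ Γ ω.1 ω.2.1}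
      = ⋃ k, ({ω : 𝒳 × 𝒮 × Fin K | ω.2.2 = k} ∩ memEvent Γ k) := by
    ext ω
    simp only [Set.mem_setOf_eq, Set.mem_iUnion, Set.mem_inter_iff, memEvent]
    exact ⟨fun h => ⟨ω.2.2, rfl, h⟩, fun ⟨k, hk, hm⟩ => hk ▸ hm⟩
  have hdis : Pairwise (Function.onFun Disjoint
      (fun k : Fin K => {ω : 𝒳 × 𝒮 × Fin K | ω.2.2 = k} ∩ memEvent Γ k)) := by
    intro k k' hkk'
    refine Set.disjoint_left.mpr ?_
    rintro ω ⟨h1, -⟩ ⟨h2, -⟩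
    exact hkk' ((h1 : ω.2.2 = k) ▸ (h2 : ω.2.2 = k'))
  have hmU : MeasurableSet {ω : 𝒳 × 𝒮 × Fin K | ω.2.2 ∈ Γ ω.1 ω.2.1} := by
    rw [hcup]; exact MeasurableSet.iUnion fun k => (measYk k).inter (hEk k)
  have hcompl : {ω : 𝒳 × 𝒮 × Fin K | ω.2.2 ∉ Γ ω.1 ω.2.1}
      = {ω : 𝒳 × 𝒮 × Fin K | ω.2.2 ∈ Γ ω.1 ω.2.1}ᶜ := rfl
  have hsum : (μ {ω : 𝒳 × 𝒮 × Fin K | ω.2.2 ∈ Γ ω.1 ω.2.1}).toReal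
      = ∑ k : Fin K, ∫ ω in memEvent Γ k, p k ω.1 ω.2.1 ∂μ := by
    rw [hcup, measure_iUnion hdis (fun k => (measYk k).inter (hEk k)), tsum_fintype,
      ENNReal.toReal_sum (fun k _ => measure_ne_top μ _)]
    refine Finset.sum_congr rfl fun k _ => ?_
    have h1 : {ω : 𝒳 × 𝒮 × Fin K | ω.2.2 = k} ∩ memEvent Γ k
        = {ω : 𝒳 × 𝒮 × Fin K | ω.2.2 = k ∧ (ω.1, ω.2.1) ∈ {q : 𝒳 × 𝒮 | k ∈ Γ q.1 q.2}} := rfl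
    have h2 : {ω : 𝒳 × 𝒮 × Fin K | (ω.1, ω.2.1) ∈ {q : 𝒳 × 𝒮 | k ∈ Γ q.1 q.2}}
        = memEvent Γ k := rfl
    rw [h1, hlink k _ (hΓ k), h2]
  unfold risk
  rw [hcompl, measure_compl hmU (measure_ne_top μ _),
    measure_univ, ENNReal.toReal_sub_of_le prob_le_one (by simp),
    ENNReal.toReal_one, hsum]

lemma setint_affine (μ : Measure (𝒳 × 𝒮 × Fin K)) [IsProbabilityMeasure μ]
    {f : 𝒳 × 𝒮 × Fin K → ℝ} (hf : Integrable f μ)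
    (T : Set (𝒳 × 𝒮 × Fin K)) (c d : ℝ) :
    ∫ ω in T, (c * f ω - d) ∂μ = c * ∫ ω in T, f ω ∂μ - d * (μ T).toReal := by
  rw [integral_sub ((hf.integrableOn).const_mul c) ((integrable_const d).integrableOn),
    MeasureTheory.integral_const_mul, setIntegral_const, smul_eq_mul, measureReal_def]
  ring


lemma lagRisk_eq (μ : Measure (𝒳 × 𝒮 × Fin K)) [IsProbabilityMeasure μ]
    (hπ : ∀ s : 𝒮, 0 < probS μ s)
    (p : Fin K → 𝒳 → 𝒮 → ℝ)
    (hpmeas : ∀ k, Measurable fun q : 𝒳 × 𝒮 => p k q.1 q.2)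
    (hp01 : ∀ k x s, p k x s ∈ Set.Icc (0:ℝ) 1)
    (hlink : ∀ (k : Fin K) (A : Set (𝒳 × 𝒮)), MeasurableSet A →
      (μ {ω | ω.2.2 = k ∧ (ω.1, ω.2.1) ∈ A}).toReal
        = ∫ ω in {ω : 𝒳 × 𝒮 × Fin K | (ω.1, ω.2.1) ∈ A}, p k ω.1 ω.2.1 ∂μ)
    (β lam : ℝ) (γ : Fin K → 𝒮 → ℝ) {Γ : 𝒳 → 𝒮 → Set (Fin K)} (hΓ : IsClassifier Γ) :
    lagRisk μ β lam γ Γ = 1 - lam * β - ∑ k : Fin K, ∑ s : 𝒮,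
      (∫ ω in memEvent Γ k ∩ {ω | ω.2.1 = s},
         (probS μ s * (p k ω.1 ω.2.1 - lam) - γ k s) ∂μ) / probS μ s := by
  have hpm : ∀ k, Measurable fun ω : 𝒳 × 𝒮 × Fin K => p k ω.1 ω.2.1 :=
    fun k => (hpmeas k).comp measurable_projXS
  have hpi : ∀ k, Integrable (fun ω : 𝒳 × 𝒮 × Fin K => p k ω.1 ω.2.1) μ := fun k =>
    integrable_of_bdd μ (hpm k) 1 fun ω => by
      have h := hp01 k ω.1 ω.2.1
      rw [Set.mem_Icc] at h
      rw [abs_le]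
      exact ⟨by linarith [h.1], h.2⟩
  have hterm : ∀ (k : Fin K) (s : 𝒮),
      (∫ ω in memEvent Γ k ∩ {ω | ω.2.1 = s},
         (probS μ s * (p k ω.1 ω.2.1 - lam) - γ k s) ∂μ) / probS μ s
      = (∫ ω in memEvent Γ k ∩ {ω | ω.2.1 = s}, p k ω.1 ω.2.1 ∂μ)
        - lam * (μ (memEvent Γ k ∩ {ω | ω.2.1 = s})).toReal
        - γ k s * condProb μ (memEvent Γ k) s := by
    intro k s
    have hps : probS μ s ≠ 0 := (hπ s).ne'
    have h0 : (fun ω : 𝒳 × 𝒮 × Fin K => probS μ s * (p k ω.1 ω.2.1 - lam) - γ k s)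
        = fun ω => probS μ s * (p k ω.1 ω.2.1) - (probS μ s * lam + γ k s) := by
      funext ω; ring
    rw [show (∫ ω in memEvent Γ k ∩ {ω | ω.2.1 = s},
         (probS μ s * (p k ω.1 ω.2.1 - lam) - γ k s) ∂μ)
       = ∫ ω in memEvent Γ k ∩ {ω | ω.2.1 = s},
         (probS μ s * (p k ω.1 ω.2.1) - (probS μ s * lam + γ k s)) ∂μ
       from by rw [h0], setint_affine μ (hpi k) _ _ _]
    unfold condProb
    field_simp
    ring
  unfold lagRisk
  rw [risk_eq μ p hlink hΓ, expSize_eq_sum μ hΓ]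
  have hI : ∀ k : Fin K, ∫ ω in memEvent Γ k, p k ω.1 ω.2.1 ∂μ
      = ∑ s : 𝒮, ∫ ω in memEvent Γ k ∩ {ω | ω.2.1 = s}, p k ω.1 ω.2.1 ∂μ :=
    fun k => integral_eq_sum_S μ (hpi k) _ (measMemEvent hΓ k)
  have hm : ∀ k : Fin K, (μ (memEvent Γ k)).toReal
      = ∑ s : 𝒮, (μ (memEvent Γ k ∩ {ω | ω.2.1 = s})).toReal :=
    fun k => meas_eq_sum_S μ _ (measMemEvent hΓ k)
  simp only [hterm, hI, hm, Finset.sum_sub_distrib, ← Finset.mul_sum]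
  ring


lemma isClassifier_oracle (μ : Measure (𝒳 × 𝒮 × Fin K)) (p : Fin K → 𝒳 → 𝒮 → ℝ)
    (hpmeas : ∀ k, Measurable fun q : 𝒳 × 𝒮 => p k q.1 q.2) (lam : ℝ) (γ : Fin K → 𝒮 → ℝ) :
    IsClassifier (oracle μ p lam γ) := by
  intro k
  have h1 : {q : 𝒳 × 𝒮 | k ∈ oracle μ p lam γ q.1 q.2}
      = {q : 𝒳 × 𝒮 | lam + γ k q.2 / probS μ q.2 ≤ p k q.1 q.2} := rfl
  rw [h1]
  exact measurableSet_le
    ((measurable_of_countable (fun s : 𝒮 => lam + γ k s / probS μ s)).comp measurable_snd)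
    (hpmeas k)

lemma mem_oracle_iff (μ : Measure (𝒳 × 𝒮 × Fin K)) (hπ : ∀ s : 𝒮, 0 < probS μ s)
    (p : Fin K → 𝒳 → 𝒮 → ℝ) (lam : ℝ) (γ : Fin K → 𝒮 → ℝ) (k : Fin K) (s : 𝒮)
    (ω : 𝒳 × 𝒮 × Fin K) (hs : ω.2.1 = s) :
    ω ∈ memEvent (oracle μ p lam γ) k ↔ 0 ≤ probS μ s * (p k ω.1 ω.2.1 - lam) - γ k s := by
  subst hs
  have h := hπ ω.2.1
  have hc : probS μ ω.2.1 * (γ k ω.2.1 / probS μ ω.2.1) = γ k ω.2.1 :=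
    mul_div_cancel₀ _ h.ne'
  constructor
  · intro h'
    have h'' : lam + γ k ω.2.1 / probS μ ω.2.1 ≤ p k ω.1 ω.2.1 := h'
    nlinarith
  · intro h'
    show lam + γ k ω.2.1 / probS μ ω.2.1 ≤ p k ω.1 ω.2.1
    nlinarith

lemma integrable_a (μ : Measure (𝒳 × 𝒮 × Fin K)) [IsProbabilityMeasure μ]
    (p : Fin K → 𝒳 → 𝒮 → ℝ)
    (hpmeas : ∀ k, Measurable fun q : 𝒳 × 𝒮 => p k q.1 q.2)
    (hp01 : ∀ k x s, p k x s ∈ Set.Icc (0:ℝ) 1)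
    (c lam d : ℝ) (k : Fin K) (hc : 0 ≤ c) (hc1 : c ≤ 1) :
    Integrable (fun ω : 𝒳 × 𝒮 × Fin K => c * (p k ω.1 ω.2.1 - lam) - d) μ := by
  refine integrable_of_bdd μ ?_ (1 + |lam| + |d|) ?_
  · exact ((((hpmeas k).comp measurable_projXS).sub_const lam).const_mul c).sub_const d
  · intro ω
    have h := hp01 k ω.1 ω.2.1
    rw [Set.mem_Icc] at h
    have h1 : |p k ω.1 ω.2.1 - lam| ≤ 1 + |lam| := by
      rw [abs_sub_comm]
      calc |lam - p k ω.1 ω.2.1| ≤ |lam| + |p k ω.1 ω.2.1| := abs_sub _ _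
        _ ≤ |lam| + 1 := by rw [abs_of_nonneg h.1]; linarith [h.2]
        _ = 1 + |lam| := by ring
    calc |c * (p k ω.1 ω.2.1 - lam) - d| ≤ |c * (p k ω.1 ω.2.1 - lam)| + |d| := abs_sub _ _
      _ = c * |p k ω.1 ω.2.1 - lam| + |d| := by rw [abs_mul, abs_of_nonneg hc]
      _ ≤ 1 * (1 + |lam|) + |d| := by
          have := abs_nonneg (p k ω.1 ω.2.1 - lam)
          gcongr
      _ = 1 + |lam| + |d| := by ring

lemma integrable_aplus (μ : Measure (𝒳 × 𝒮 × Fin K)) [IsProbabilityMeasure μ]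
    (p : Fin K → 𝒳 → 𝒮 → ℝ)
    (hpmeas : ∀ k, Measurable fun q : 𝒳 × 𝒮 => p k q.1 q.2)
    (hp01 : ∀ k x s, p k x s ∈ Set.Icc (0:ℝ) 1)
    (c lam d : ℝ) (k : Fin K) (hc : 0 ≤ c) (hc1 : c ≤ 1) :
    Integrable (fun ω : 𝒳 × 𝒮 × Fin K => max (c * (p k ω.1 ω.2.1 - lam) - d) 0) μ :=
  (integrable_a μ p hpmeas hp01 c lam d k hc hc1).pos_part


lemma probS_le_one (μ : Measure (𝒳 × 𝒮 × Fin K)) [IsProbabilityMeasure μ] (s : 𝒮) :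
    probS μ s ≤ 1 := by
  rw [probS]
  simpa using ENNReal.toReal_mono (by simp) (prob_le_one (μ := μ) (s := {ω | ω.2.1 = s}))

lemma Hfun_expand (μ : Measure (𝒳 × 𝒮 × Fin K)) (p : Fin K → 𝒳 → 𝒮 → ℝ)
    (β lam : ℝ) (γ : Fin K → 𝒮 → ℝ) :
    Hfun μ p β lam γ = (∑ k : Fin K, ∑ s : 𝒮,
      (∫ ω in {ω : 𝒳 × 𝒮 × Fin K | ω.2.1 = s},
        max (probS μ s * (p k ω.1 ω.2.1 - lam) - γ k s) 0 ∂μ) / probS μ s) + lam * β := rfl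

lemma lagRisk_ge (μ : Measure (𝒳 × 𝒮 × Fin K)) [IsProbabilityMeasure μ]
    (hπ : ∀ s : 𝒮, 0 < probS μ s)
    (p : Fin K → 𝒳 → 𝒮 → ℝ)
    (hpmeas : ∀ k, Measurable fun q : 𝒳 × 𝒮 => p k q.1 q.2)
    (hp01 : ∀ k x s, p k x s ∈ Set.Icc (0:ℝ) 1)
    (hlink : ∀ (k : Fin K) (A : Set (𝒳 × 𝒮)), MeasurableSet A →
      (μ {ω | ω.2.2 = k ∧ (ω.1, ω.2.1) ∈ A}).toReal
        = ∫ ω in {ω : 𝒳 × 𝒮 × Fin K | (ω.1, ω.2.1) ∈ A}, p k ω.1 ω.2.1 ∂μ)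
    (β lam : ℝ) (γ : Fin K → 𝒮 → ℝ) {Γ : 𝒳 → 𝒮 → Set (Fin K)} (hΓ : IsClassifier Γ) :
    1 - Hfun μ p β lam γ ≤ lagRisk μ β lam γ Γ := by
  rw [lagRisk_eq μ hπ p hpmeas hp01 hlink β lam γ hΓ, Hfun_expand]
  have key : ∀ (k : Fin K) (s : 𝒮),
      (∫ ω in memEvent Γ k ∩ {ω | ω.2.1 = s},
        (probS μ s * (p k ω.1 ω.2.1 - lam) - γ k s) ∂μ) / probS μ s
      ≤ (∫ ω in {ω : 𝒳 × 𝒮 × Fin K | ω.2.1 = s},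
        max (probS μ s * (p k ω.1 ω.2.1 - lam) - γ k s) 0 ∂μ) / probS μ s := by
    intro k s
    have hps := hπ s
    have hIa := integrable_a μ p hpmeas hp01 (probS μ s) lam (γ k s) k hps.le
      (probS_le_one μ s)
    have hIm := hIa.pos_part
    gcongr
    calc (∫ ω in memEvent Γ k ∩ {ω | ω.2.1 = s},
          (probS μ s * (p k ω.1 ω.2.1 - lam) - γ k s) ∂μ)
        ≤ ∫ ω in memEvent Γ k ∩ {ω | ω.2.1 = s},
          max (probS μ s * (p k ω.1 ω.2.1 - lam) - γ k s) 0 ∂μ :=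
          setIntegral_mono hIa.integrableOn hIm.integrableOn (fun ω => le_max_left _ _)
      _ ≤ ∫ ω in {ω : 𝒳 × 𝒮 × Fin K | ω.2.1 = s},
          max (probS μ s * (p k ω.1 ω.2.1 - lam) - γ k s) 0 ∂μ :=
          setIntegral_mono_set hIm.integrableOn
            (Filter.Eventually.of_forall (fun ω => le_max_right _ _))
            (HasSubset.Subset.eventuallyLE Set.inter_subset_right)
  have hsum := Finset.sum_le_sum
    (fun k (_ : k ∈ Finset.univ) => Finset.sum_le_sum (fun s (_ : s ∈ Finset.univ) => key k s))
  linarith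

lemma lagRisk_oracle (μ : Measure (𝒳 × 𝒮 × Fin K)) [IsProbabilityMeasure μ]
    (hπ : ∀ s : 𝒮, 0 < probS μ s)
    (p : Fin K → 𝒳 → 𝒮 → ℝ)
    (hpmeas : ∀ k, Measurable fun q : 𝒳 × 𝒮 => p k q.1 q.2)
    (hp01 : ∀ k x s, p k x s ∈ Set.Icc (0:ℝ) 1)
    (hlink : ∀ (k : Fin K) (A : Set (𝒳 × 𝒮)), MeasurableSet A →
      (μ {ω | ω.2.2 = k ∧ (ω.1, ω.2.1) ∈ A}).toReal
        = ∫ ω in {ω : 𝒳 × 𝒮 × Fin K | (ω.1, ω.2.1) ∈ A}, p k ω.1 ω.2.1 ∂μ)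
    (β lam : ℝ) (γ : Fin K → 𝒮 → ℝ) :
    lagRisk μ β lam γ (oracle μ p lam γ) = 1 - Hfun μ p β lam γ := by
  have hcl := isClassifier_oracle μ p hpmeas lam γ
  rw [lagRisk_eq μ hπ p hpmeas hp01 hlink β lam γ hcl, Hfun_expand]
  have key : ∀ (k : Fin K) (s : 𝒮),
      (∫ ω in memEvent (oracle μ p lam γ) k ∩ {ω | ω.2.1 = s},
        (probS μ s * (p k ω.1 ω.2.1 - lam) - γ k s) ∂μ)
      = ∫ ω in {ω : 𝒳 × 𝒮 × Fin K | ω.2.1 = s},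
        max (probS μ s * (p k ω.1 ω.2.1 - lam) - γ k s) 0 ∂μ := by
    intro k s
    rw [Set.inter_comm, ← setIntegral_indicator (measMemEvent hcl k)]
    refine setIntegral_congr_fun (measSs s) ?_
    intro ω hω
    have hiff := mem_oracle_iff μ hπ p lam γ k s ω hω
    by_cases hmem : ω ∈ memEvent (oracle μ p lam γ) k
    · rw [Set.indicator_of_mem hmem]
      exact (max_eq_left (hiff.mp hmem)).symm
    · rw [Set.indicator_of_notMem hmem]
      have h0 : ¬ (0 ≤ probS μ s * (p k ω.1 ω.2.1 - lam) - γ k s) :=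
        fun h => hmem (hiff.mpr h)
      exact (max_eq_right (le_of_not_ge h0)).symm
  simp only [key]
  ring


lemma Fks_mul (μ : Measure (𝒳 × 𝒮 × Fin K)) (hπ : ∀ s : 𝒮, 0 < probS μ s)
    (p : Fin K → 𝒳 → 𝒮 → ℝ) (k : Fin K) (s : 𝒮) (v : ℝ) :
    (μ ({ω | p k ω.1 ω.2.1 ≤ v} ∩ {ω | ω.2.1 = s})).toReal = probS μ s * Fks μ p k s v := by
  rw [Fks, condProb, mul_comm, div_mul_cancel₀ _ (hπ s).ne']

lemma meas_p_eq_zero (μ : Measure (𝒳 × 𝒮 × Fin K)) [IsProbabilityMeasure μ]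
    (hπ : ∀ s : 𝒮, 0 < probS μ s) (p : Fin K → 𝒳 → 𝒮 → ℝ)
    (hpmeas : ∀ k, Measurable fun q : 𝒳 × 𝒮 => p k q.1 q.2)
    (hA1 : Assumption1 μ p) (k : Fin K) (s : 𝒮) (u : ℝ) :
    (μ ({ω | p k ω.1 ω.2.1 = u} ∩ {ω | ω.2.1 = s})).toReal = 0 := by
  have hpm : Measurable fun ω : 𝒳 × 𝒮 × Fin K => p k ω.1 ω.2.1 :=
    (hpmeas k).comp measurable_projXS
  have hmle : ∀ v : ℝ, MeasurableSet ({ω : 𝒳 × 𝒮 × Fin K | p k ω.1 ω.2.1 ≤ v} ∩ {ω | ω.2.1 = s}) :=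
    fun v => (measurableSet_le hpm measurable_const).inter (measSs s)
  have hsub : ∀ n : ℕ, ({ω : 𝒳 × 𝒮 × Fin K | p k ω.1 ω.2.1 = u} ∩ {ω | ω.2.1 = s})
      ⊆ ({ω : 𝒳 × 𝒮 × Fin K | p k ω.1 ω.2.1 ≤ u} ∩ {ω | ω.2.1 = s})
        \ ({ω : 𝒳 × 𝒮 × Fin K | p k ω.1 ω.2.1 ≤ u - 1/(n+1)} ∩ {ω | ω.2.1 = s}) := by
    intro n ω hω
    obtain ⟨h1, h2⟩ := hω
    refine ⟨⟨le_of_eq h1, h2⟩, ?_⟩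
    rintro ⟨h3, -⟩
    have h4 : (0:ℝ) < 1/(n+1) := by positivity
    have h1' : p k ω.1 ω.2.1 = u := h1
    have h3' : p k ω.1 ω.2.1 ≤ u - 1/(n+1) := h3
    linarith
  have hsub2 : ∀ n : ℕ, ({ω : 𝒳 × 𝒮 × Fin K | p k ω.1 ω.2.1 ≤ u - 1/(n+1)} ∩ {ω | ω.2.1 = s})
      ⊆ ({ω : 𝒳 × 𝒮 × Fin K | p k ω.1 ω.2.1 ≤ u} ∩ {ω | ω.2.1 = s}) := by
    intro n ω hω
    obtain ⟨h1, h2⟩ := hω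
    have h4 : (0:ℝ) < 1/(n+1) := by positivity
    have h1' : p k ω.1 ω.2.1 ≤ u - 1/(n+1) := h1
    exact ⟨by simp only [Set.mem_setOf_eq]; linarith, h2⟩
  have hle : ∀ n : ℕ, (μ ({ω | p k ω.1 ω.2.1 = u} ∩ {ω | ω.2.1 = s})).toReal
      ≤ probS μ s * Fks μ p k s u - probS μ s * Fks μ p k s (u - 1/(n+1)) := by
    intro n
    have hd := measure_diff (μ := μ) (hsub2 n) (hmle _).nullMeasurableSet (measure_ne_top μ _)
    calc (μ ({ω | p k ω.1 ω.2.1 = u} ∩ {ω | ω.2.1 = s})).toReal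
        ≤ (μ (({ω : 𝒳 × 𝒮 × Fin K | p k ω.1 ω.2.1 ≤ u} ∩ {ω | ω.2.1 = s})
            \ ({ω : 𝒳 × 𝒮 × Fin K | p k ω.1 ω.2.1 ≤ u - 1/(n+1)} ∩ {ω | ω.2.1 = s}))).toReal :=
          ENNReal.toReal_mono (measure_ne_top μ _) (measure_mono (hsub n))
      _ = probS μ s * Fks μ p k s u - probS μ s * Fks μ p k s (u - 1/(n+1)) := by
          rw [hd, ENNReal.toReal_sub_of_le (measure_mono (hsub2 n)) (measure_ne_top μ _),
            Fks_mul μ hπ, Fks_mul μ hπ]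
  have htend : Filter.Tendsto
      (fun n : ℕ => probS μ s * Fks μ p k s u - probS μ s * Fks μ p k s (u - 1/(n+1)))
      Filter.atTop (nhds 0) := by
    have h1 : Filter.Tendsto (fun n : ℕ => u - 1/((n:ℝ)+1)) Filter.atTop (nhds u) := by
      simpa using tendsto_const_nhds.sub (tendsto_one_div_add_atTop_nhds_zero_nat (𝕜 := ℝ))
    have h2 := ((hA1 k s).tendsto u).comp h1
    have h3 := (tendsto_const_nhds :
      Filter.Tendsto (fun _ : ℕ => probS μ s * Fks μ p k s u) Filter.atTop _).sub
      (h2.const_mul (probS μ s))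
    simpa using h3
  exact le_antisymm (ge_of_tendsto' htend hle) ENNReal.toReal_nonneg

lemma meas_p_gt (μ : Measure (𝒳 × 𝒮 × Fin K)) [IsProbabilityMeasure μ]
    (hπ : ∀ s : 𝒮, 0 < probS μ s) (p : Fin K → 𝒳 → 𝒮 → ℝ)
    (hpmeas : ∀ k, Measurable fun q : 𝒳 × 𝒮 => p k q.1 q.2)
    (k : Fin K) (s : 𝒮) (u : ℝ) :
    (μ ({ω | u < p k ω.1 ω.2.1} ∩ {ω | ω.2.1 = s})).toReal
      = probS μ s * (1 - Fks μ p k s u) := by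
  have hpm : Measurable fun ω : 𝒳 × 𝒮 × Fin K => p k ω.1 ω.2.1 :=
    (hpmeas k).comp measurable_projXS
  have hmle : MeasurableSet ({ω : 𝒳 × 𝒮 × Fin K | p k ω.1 ω.2.1 ≤ u} ∩ {ω | ω.2.1 = s}) :=
    (measurableSet_le hpm measurable_const).inter (measSs s)
  have hset : {ω : 𝒳 × 𝒮 × Fin K | u < p k ω.1 ω.2.1} ∩ {ω | ω.2.1 = s}
      = {ω : 𝒳 × 𝒮 × Fin K | ω.2.1 = s}
        \ ({ω : 𝒳 × 𝒮 × Fin K | p k ω.1 ω.2.1 ≤ u} ∩ {ω | ω.2.1 = s}) := by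
    ext ω
    constructor
    · rintro ⟨h1, h2⟩
      have h1' : u < p k ω.1 ω.2.1 := h1
      exact ⟨h2, fun h3 => absurd (h3.1 : p k ω.1 ω.2.1 ≤ u) (not_le.mpr h1')⟩
    · rintro ⟨h1, h2⟩
      have h4 : ¬ p k ω.1 ω.2.1 ≤ u := fun h3 => h2 ⟨h3, h1⟩
      exact ⟨(not_le.mp h4 : u < p k ω.1 ω.2.1), h1⟩
  rw [hset, measure_diff Set.inter_subset_right hmle.nullMeasurableSet (measure_ne_top μ _),
    ENNReal.toReal_sub_of_le (measure_mono Set.inter_subset_right) (measure_ne_top μ _),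
    Fks_mul μ hπ]
  show probS μ s - _ = _
  ring

lemma meas_p_ge (μ : Measure (𝒳 × 𝒮 × Fin K)) [IsProbabilityMeasure μ]
    (hπ : ∀ s : 𝒮, 0 < probS μ s) (p : Fin K → 𝒳 → 𝒮 → ℝ)
    (hpmeas : ∀ k, Measurable fun q : 𝒳 × 𝒮 => p k q.1 q.2)
    (hA1 : Assumption1 μ p) (k : Fin K) (s : 𝒮) (u : ℝ) :
    (μ ({ω | u ≤ p k ω.1 ω.2.1} ∩ {ω | ω.2.1 = s})).toReal
      = probS μ s * (1 - Fks μ p k s u) := by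
  have hpm : Measurable fun ω : 𝒳 × 𝒮 × Fin K => p k ω.1 ω.2.1 :=
    (hpmeas k).comp measurable_projXS
  have hset : {ω : 𝒳 × 𝒮 × Fin K | u ≤ p k ω.1 ω.2.1} ∩ {ω | ω.2.1 = s}
      = ({ω : 𝒳 × 𝒮 × Fin K | u < p k ω.1 ω.2.1} ∩ {ω | ω.2.1 = s})
        ∪ ({ω : 𝒳 × 𝒮 × Fin K | p k ω.1 ω.2.1 = u} ∩ {ω | ω.2.1 = s}) := by
    ext ω
    simp only [Set.mem_inter_iff, Set.mem_setOf_eq, Set.mem_union]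
    constructor
    · rintro ⟨h1, h2⟩
      rcases lt_or_eq_of_le h1 with h | h
      · exact Or.inl ⟨h, h2⟩
      · exact Or.inr ⟨h.symm, h2⟩
    · rintro (⟨h1, h2⟩ | ⟨h1, h2⟩)
      · exact ⟨le_of_lt h1, h2⟩
      · exact ⟨le_of_eq h1.symm, h2⟩
  have hdisj : Disjoint ({ω : 𝒳 × 𝒮 × Fin K | u < p k ω.1 ω.2.1} ∩ {ω | ω.2.1 = s})
      ({ω : 𝒳 × 𝒮 × Fin K | p k ω.1 ω.2.1 = u} ∩ {ω | ω.2.1 = s}) := by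
    refine Set.disjoint_left.mpr ?_
    rintro ω ⟨h1, -⟩ ⟨h2, -⟩
    have h1' : u < p k ω.1 ω.2.1 := h1
    have h2' : p k ω.1 ω.2.1 = u := h2
    linarith [h1', le_of_eq h2']
  rw [hset, measure_union hdisj ((measurableSet_eq_fun hpm measurable_const).inter (measSs s)),
    ENNReal.toReal_add (measure_ne_top μ _) (measure_ne_top μ _),
    meas_p_gt μ hπ p hpmeas k s u, meas_p_eq_zero μ hπ p hpmeas hA1 k s u, add_zero]


lemma meas_oracle_inter (μ : Measure (𝒳 × 𝒮 × Fin K)) [IsProbabilityMeasure μ]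
    (hπ : ∀ s : 𝒮, 0 < probS μ s) (p : Fin K → 𝒳 → 𝒮 → ℝ)
    (hpmeas : ∀ k, Measurable fun q : 𝒳 × 𝒮 => p k q.1 q.2)
    (hA1 : Assumption1 μ p) (lam : ℝ) (γ : Fin K → 𝒮 → ℝ) (k : Fin K) (s : 𝒮) :
    (μ (memEvent (oracle μ p lam γ) k ∩ {ω | ω.2.1 = s})).toReal
      = probS μ s * (1 - Fks μ p k s (lam + γ k s / probS μ s)) := by
  have hset : memEvent (oracle μ p lam γ) k ∩ {ω : 𝒳 × 𝒮 × Fin K | ω.2.1 = s}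
      = {ω : 𝒳 × 𝒮 × Fin K | lam + γ k s / probS μ s ≤ p k ω.1 ω.2.1} ∩ {ω | ω.2.1 = s} := by
    ext ⟨x, s', y⟩
    constructor
    · rintro ⟨h1, h2⟩
      have h2' : s' = s := h2
      subst h2'
      exact ⟨h1, h2⟩
    · rintro ⟨h1, h2⟩
      have h2' : s' = s := h2
      subst h2'
      exact ⟨h1, h2⟩
  rw [hset, meas_p_ge μ hπ p hpmeas hA1]

lemma condProb_oracle (μ : Measure (𝒳 × 𝒮 × Fin K)) [IsProbabilityMeasure μ]
    (hπ : ∀ s : 𝒮, 0 < probS μ s) (p : Fin K → 𝒳 → 𝒮 → ℝ)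
    (hpmeas : ∀ k, Measurable fun q : 𝒳 × 𝒮 => p k q.1 q.2)
    (hA1 : Assumption1 μ p) (lam : ℝ) (γ : Fin K → 𝒮 → ℝ) (k : Fin K) (s : 𝒮) :
    condProb μ (memEvent (oracle μ p lam γ) k) s
      = 1 - Fks μ p k s (lam + γ k s / probS μ s) := by
  rw [condProb, meas_oracle_inter μ hπ p hpmeas hA1, mul_comm,
    mul_div_assoc, div_self (hπ s).ne', mul_one]

lemma expSize_oracle (μ : Measure (𝒳 × 𝒮 × Fin K)) [IsProbabilityMeasure μ]
    (hπ : ∀ s : 𝒮, 0 < probS μ s) (p : Fin K → 𝒳 → 𝒮 → ℝ)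
    (hpmeas : ∀ k, Measurable fun q : 𝒳 × 𝒮 => p k q.1 q.2)
    (hA1 : Assumption1 μ p) (lam : ℝ) (γ : Fin K → 𝒮 → ℝ) :
    expSize μ (oracle μ p lam γ)
      = ∑ k : Fin K, ∑ s : 𝒮, probS μ s * (1 - Fks μ p k s (lam + γ k s / probS μ s)) := by
  rw [expSize_eq_sum μ (isClassifier_oracle μ p hpmeas lam γ)]
  refine Finset.sum_congr rfl fun k _ => ?_
  rw [meas_eq_sum_S μ _ (measMemEvent (isClassifier_oracle μ p hpmeas lam γ) k)]
  exact Finset.sum_congr rfl fun s _ => meas_oracle_inter μ hπ p hpmeas hA1 lam γ k s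

lemma set_a_ge (μ : Measure (𝒳 × 𝒮 × Fin K)) (hπ : ∀ s : 𝒮, 0 < probS μ s)
    (p : Fin K → 𝒳 → 𝒮 → ℝ) (k : Fin K) (s : 𝒮) (lam d c : ℝ) :
    {ω : 𝒳 × 𝒮 × Fin K | c ≤ probS μ s * (p k ω.1 ω.2.1 - lam) - d}
      = {ω : 𝒳 × 𝒮 × Fin K | lam + (d + c) / probS μ s ≤ p k ω.1 ω.2.1} := by
  have hπs := hπ s
  ext ω
  simp only [Set.mem_setOf_eq]
  rw [show lam + (d + c) / probS μ s ≤ p k ω.1 ω.2.1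
    ↔ (d + c) / probS μ s ≤ p k ω.1 ω.2.1 - lam from ⟨fun h => by linarith, fun h => by linarith⟩,
    div_le_iff₀ hπs]
  constructor <;> intro h <;> nlinarith

lemma set_a_gt (μ : Measure (𝒳 × 𝒮 × Fin K)) (hπ : ∀ s : 𝒮, 0 < probS μ s)
    (p : Fin K → 𝒳 → 𝒮 → ℝ) (k : Fin K) (s : 𝒮) (lam d c : ℝ) :
    {ω : 𝒳 × 𝒮 × Fin K | -c < probS μ s * (p k ω.1 ω.2.1 - lam) - d}
      = {ω : 𝒳 × 𝒮 × Fin K | lam + (d - c) / probS μ s < p k ω.1 ω.2.1} := by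
  have hπs := hπ s
  ext ω
  simp only [Set.mem_setOf_eq]
  rw [show lam + (d - c) / probS μ s < p k ω.1 ω.2.1
    ↔ (d - c) / probS μ s < p k ω.1 ω.2.1 - lam from ⟨fun h => by linarith, fun h => by linarith⟩,
    div_lt_iff₀ hπs]
  constructor <;> intro h <;> nlinarith

lemma measurable_afun (μ : Measure (𝒳 × 𝒮 × Fin K)) (p : Fin K → 𝒳 → 𝒮 → ℝ)
    (hpmeas : ∀ k, Measurable fun q : 𝒳 × 𝒮 => p k q.1 q.2) (k : Fin K) (s : 𝒮) (lam d : ℝ) :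
    Measurable (fun ω : 𝒳 × 𝒮 × Fin K => probS μ s * (p k ω.1 ω.2.1 - lam) - d) :=
  ((((hpmeas k).comp measurable_projXS).sub_const lam).const_mul (probS μ s)).sub_const d

lemma int_max_shift_down (μ : Measure (𝒳 × 𝒮 × Fin K)) [IsProbabilityMeasure μ]
    (hπ : ∀ s : 𝒮, 0 < probS μ s) (p : Fin K → 𝒳 → 𝒮 → ℝ)
    (hpmeas : ∀ k, Measurable fun q : 𝒳 × 𝒮 => p k q.1 q.2)
    (hp01 : ∀ k x s, p k x s ∈ Set.Icc (0:ℝ) 1)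
    (k : Fin K) (s : 𝒮) (lam d c : ℝ) (hc : 0 ≤ c) :
    ∫ ω in {ω : 𝒳 × 𝒮 × Fin K | ω.2.1 = s},
        max ((probS μ s * (p k ω.1 ω.2.1 - lam) - d) - c) 0 ∂μ
      ≤ (∫ ω in {ω : 𝒳 × 𝒮 × Fin K | ω.2.1 = s},
          max (probS μ s * (p k ω.1 ω.2.1 - lam) - d) 0 ∂μ)
        - c * (μ ({ω | c ≤ probS μ s * (p k ω.1 ω.2.1 - lam) - d}
            ∩ {ω | ω.2.1 = s})).toReal := by
  have hb0 := (hπ s).le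
  have hb1 := probS_le_one μ s
  have hIa := integrable_a μ p hpmeas hp01 (probS μ s) lam d k hb0 hb1
  have hI1 : Integrable (fun ω : 𝒳 × 𝒮 × Fin K =>
      max ((probS μ s * (p k ω.1 ω.2.1 - lam) - d) - c) 0) μ := by
    have := (integrable_a μ p hpmeas hp01 (probS μ s) lam (d + c) k hb0 hb1).pos_part
    convert this using 2 with ω
    ring_nf
  have hmax := hIa.pos_part
  have hAmeas : MeasurableSet {ω : 𝒳 × 𝒮 × Fin K |
      c ≤ probS μ s * (p k ω.1 ω.2.1 - lam) - d} :=
    measurableSet_le measurable_const (measurable_afun μ p hpmeas k s lam d)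
  have hind : Integrable (Set.indicator {ω : 𝒳 × 𝒮 × Fin K |
      c ≤ probS μ s * (p k ω.1 ω.2.1 - lam) - d} (fun _ => c)) μ :=
    (integrable_const c).indicator hAmeas
  have hpw : ∀ ω : 𝒳 × 𝒮 × Fin K,
      max ((probS μ s * (p k ω.1 ω.2.1 - lam) - d) - c) 0
      ≤ max (probS μ s * (p k ω.1 ω.2.1 - lam) - d) 0
        - Set.indicator {ω : 𝒳 × 𝒮 × Fin K |
            c ≤ probS μ s * (p k ω.1 ω.2.1 - lam) - d} (fun _ => c) ω := by
    intro ω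
    by_cases h : c ≤ probS μ s * (p k ω.1 ω.2.1 - lam) - d
    · rw [Set.indicator_of_mem (show ω ∈ {ω : 𝒳 × 𝒮 × Fin K |
          c ≤ probS μ s * (p k ω.1 ω.2.1 - lam) - d} from h),
        max_eq_left (by linarith), max_eq_left (by linarith)]
    · rw [Set.indicator_of_notMem (show ω ∉ {ω : 𝒳 × 𝒮 × Fin K |
          c ≤ probS μ s * (p k ω.1 ω.2.1 - lam) - d} from h), sub_zero]
      exact max_le_max (by linarith) le_rfl
  calc ∫ ω in {ω : 𝒳 × 𝒮 × Fin K | ω.2.1 = s},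
        max ((probS μ s * (p k ω.1 ω.2.1 - lam) - d) - c) 0 ∂μ
      ≤ ∫ ω in {ω : 𝒳 × 𝒮 × Fin K | ω.2.1 = s},
        (max (probS μ s * (p k ω.1 ω.2.1 - lam) - d) 0
          - Set.indicator {ω : 𝒳 × 𝒮 × Fin K |
              c ≤ probS μ s * (p k ω.1 ω.2.1 - lam) - d} (fun _ => c) ω) ∂μ :=
        setIntegral_mono hI1.integrableOn (hmax.sub hind).integrableOn hpw
    _ = _ := by
        rw [integral_sub hmax.integrableOn hind.integrableOn,
          setIntegral_indicator hAmeas, setIntegral_const, smul_eq_mul, measureReal_def, Set.inter_comm]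
        ring

lemma int_max_shift_up (μ : Measure (𝒳 × 𝒮 × Fin K)) [IsProbabilityMeasure μ]
    (hπ : ∀ s : 𝒮, 0 < probS μ s) (p : Fin K → 𝒳 → 𝒮 → ℝ)
    (hpmeas : ∀ k, Measurable fun q : 𝒳 × 𝒮 => p k q.1 q.2)
    (hp01 : ∀ k x s, p k x s ∈ Set.Icc (0:ℝ) 1)
    (k : Fin K) (s : 𝒮) (lam d c : ℝ) (hc : 0 ≤ c) :
    ∫ ω in {ω : 𝒳 × 𝒮 × Fin K | ω.2.1 = s},
        max ((probS μ s * (p k ω.1 ω.2.1 - lam) - d) + c) 0 ∂μ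
      ≤ (∫ ω in {ω : 𝒳 × 𝒮 × Fin K | ω.2.1 = s},
          max (probS μ s * (p k ω.1 ω.2.1 - lam) - d) 0 ∂μ)
        + c * (μ ({ω | -c < probS μ s * (p k ω.1 ω.2.1 - lam) - d}
            ∩ {ω | ω.2.1 = s})).toReal := by
  have hb0 := (hπ s).le
  have hb1 := probS_le_one μ s
  have hIa := integrable_a μ p hpmeas hp01 (probS μ s) lam d k hb0 hb1
  have hI1 : Integrable (fun ω : 𝒳 × 𝒮 × Fin K =>
      max ((probS μ s * (p k ω.1 ω.2.1 - lam) - d) + c) 0) μ := by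
    have := (integrable_a μ p hpmeas hp01 (probS μ s) lam (d - c) k hb0 hb1).pos_part
    convert this using 2 with ω
    ring_nf
  have hmax := hIa.pos_part
  have hAmeas : MeasurableSet {ω : 𝒳 × 𝒮 × Fin K |
      -c < probS μ s * (p k ω.1 ω.2.1 - lam) - d} :=
    measurableSet_lt measurable_const (measurable_afun μ p hpmeas k s lam d)
  have hind : Integrable (Set.indicator {ω : 𝒳 × 𝒮 × Fin K |
      -c < probS μ s * (p k ω.1 ω.2.1 - lam) - d} (fun _ => c)) μ :=
    (integrable_const c).indicator hAmeas
  have hpw : ∀ ω : 𝒳 × 𝒮 × Fin K,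
      max ((probS μ s * (p k ω.1 ω.2.1 - lam) - d) + c) 0
      ≤ max (probS μ s * (p k ω.1 ω.2.1 - lam) - d) 0
        + Set.indicator {ω : 𝒳 × 𝒮 × Fin K |
            -c < probS μ s * (p k ω.1 ω.2.1 - lam) - d} (fun _ => c) ω := by
    intro ω
    by_cases h : -c < probS μ s * (p k ω.1 ω.2.1 - lam) - d
    · rw [Set.indicator_of_mem (show ω ∈ {ω : 𝒳 × 𝒮 × Fin K |
          -c < probS μ s * (p k ω.1 ω.2.1 - lam) - d} from h), max_eq_left (by linarith)]
      have := le_max_left (probS μ s * (p k ω.1 ω.2.1 - lam) - d) (0:ℝ)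
      linarith
    · rw [Set.indicator_of_notMem (show ω ∉ {ω : 𝒳 × 𝒮 × Fin K |
          -c < probS μ s * (p k ω.1 ω.2.1 - lam) - d} from h), add_zero,
        max_eq_right (by push_neg at h; linarith)]
      exact le_max_right _ _
  calc ∫ ω in {ω : 𝒳 × 𝒮 × Fin K | ω.2.1 = s},
        max ((probS μ s * (p k ω.1 ω.2.1 - lam) - d) + c) 0 ∂μ
      ≤ ∫ ω in {ω : 𝒳 × 𝒮 × Fin K | ω.2.1 = s},
        (max (probS μ s * (p k ω.1 ω.2.1 - lam) - d) 0
          + Set.indicator {ω : 𝒳 × 𝒮 × Fin K |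
              -c < probS μ s * (p k ω.1 ω.2.1 - lam) - d} (fun _ => c) ω) ∂μ :=
        setIntegral_mono hI1.integrableOn (hmax.add hind).integrableOn hpw
    _ = _ := by
        rw [integral_add hmax.integrableOn hind.integrableOn,
          setIntegral_indicator hAmeas, setIntegral_const, smul_eq_mul, measureReal_def, Set.inter_comm]
        ring


lemma minimizer_size_le (μ : Measure (𝒳 × 𝒮 × Fin K)) [IsProbabilityMeasure μ]
    (hπ : ∀ s : 𝒮, 0 < probS μ s) (p : Fin K → 𝒳 → 𝒮 → ℝ)
    (hpmeas : ∀ k, Measurable fun q : 𝒳 × 𝒮 => p k q.1 q.2)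
    (hp01 : ∀ k x s, p k x s ∈ Set.Icc (0:ℝ) 1)
    (hA1 : Assumption1 μ p) (β : ℝ) (hβ0 : 0 < β)
    (lam : ℝ) (γ : Fin K → 𝒮 → ℝ) (hmem : (lam, γ) ∈ Δset K 𝒮)
    (hmin : ∀ r ∈ Δset K 𝒮, Hfun μ p β lam γ ≤ Hfun μ p β r.1 r.2) :
    ∑ k : Fin K, ∑ s : 𝒮, probS μ s * (1 - Fks μ p k s (lam + γ k s / probS μ s)) ≤ β := by
  have key : ∀ h : ℝ, 0 < h →
      ∑ k : Fin K, ∑ s : 𝒮, probS μ s * (1 - Fks μ p k s (lam + h + γ k s / probS μ s)) ≤ β := by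
    intro h hh
    have hmem' : ((lam + h, γ) : ℝ × (Fin K → 𝒮 → ℝ)) ∈ Δset K 𝒮 := by
      refine ⟨?_, hmem.2⟩
      have h0 : (0:ℝ) ≤ lam := hmem.1
      show (0:ℝ) ≤ lam + h
      linarith
    have h1 := hmin (lam + h, γ) hmem'
    rw [Hfun_expand, Hfun_expand] at h1
    have h2 : ∀ (k : Fin K) (s : 𝒮),
        (∫ ω in {ω : 𝒳 × 𝒮 × Fin K | ω.2.1 = s},
          max (probS μ s * (p k ω.1 ω.2.1 - (lam + h)) - γ k s) 0 ∂μ) / probS μ s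
        ≤ (∫ ω in {ω : 𝒳 × 𝒮 × Fin K | ω.2.1 = s},
            max (probS μ s * (p k ω.1 ω.2.1 - lam) - γ k s) 0 ∂μ) / probS μ s
          - h * (probS μ s * (1 - Fks μ p k s (lam + h + γ k s / probS μ s))) := by
      intro k s
      have hπs := hπ s
      have hbd := int_max_shift_down μ hπ p hpmeas hp01 k s lam (γ k s) (probS μ s * h)
        (by positivity)
      have heq1 : (fun ω : 𝒳 × 𝒮 × Fin K =>
          max (probS μ s * (p k ω.1 ω.2.1 - (lam + h)) - γ k s) 0)
          = fun ω => max ((probS μ s * (p k ω.1 ω.2.1 - lam) - γ k s) - probS μ s * h) 0 := by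
        funext ω; congr 1; ring
      have heq2 : {ω : 𝒳 × 𝒮 × Fin K |
          probS μ s * h ≤ probS μ s * (p k ω.1 ω.2.1 - lam) - γ k s}
          = {ω : 𝒳 × 𝒮 × Fin K | lam + h + γ k s / probS μ s ≤ p k ω.1 ω.2.1} := by
        rw [set_a_ge μ hπ p k s lam (γ k s) (probS μ s * h)]
        have : lam + (γ k s + probS μ s * h) / probS μ s = lam + h + γ k s / probS μ s := by
          field_simp
          ring
        rw [this]
      rw [heq1]
      rw [heq2] at hbd
      have hmeq := meas_p_ge μ hπ p hpmeas hA1 k s (lam + h + γ k s / probS μ s)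
      rw [hmeq] at hbd
      have hdiv := (div_le_div_iff_of_pos_right hπs).mpr hbd
      calc (∫ ω in {ω : 𝒳 × 𝒮 × Fin K | ω.2.1 = s},
            max ((probS μ s * (p k ω.1 ω.2.1 - lam) - γ k s) - probS μ s * h) 0 ∂μ) / probS μ s
          ≤ ((∫ ω in {ω : 𝒳 × 𝒮 × Fin K | ω.2.1 = s},
            max (probS μ s * (p k ω.1 ω.2.1 - lam) - γ k s) 0 ∂μ)
            - probS μ s * h * (probS μ s *
              (1 - Fks μ p k s (lam + h + γ k s / probS μ s)))) / probS μ s := hdiv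
        _ = (∫ ω in {ω : 𝒳 × 𝒮 × Fin K | ω.2.1 = s},
            max (probS μ s * (p k ω.1 ω.2.1 - lam) - γ k s) 0 ∂μ) / probS μ s
          - h * (probS μ s * (1 - Fks μ p k s (lam + h + γ k s / probS μ s))) := by
            field_simp
    have h2' := Finset.sum_le_sum (fun k (_ : k ∈ Finset.univ) =>
      Finset.sum_le_sum (fun s (_ : s ∈ Finset.univ) => h2 k s))
    simp only [Finset.sum_sub_distrib, ← Finset.mul_sum] at h2'
    have hfin : h * (∑ k : Fin K, ∑ s : 𝒮,
        probS μ s * (1 - Fks μ p k s (lam + h + γ k s / probS μ s))) ≤ h * β := by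
      linarith
    exact le_of_mul_le_mul_left hfin hh
  have hlim : Filter.Tendsto (fun n : ℕ => ∑ k : Fin K, ∑ s : 𝒮,
      probS μ s * (1 - Fks μ p k s (lam + 1/((n:ℝ)+1) + γ k s / probS μ s)))
      Filter.atTop (nhds (∑ k : Fin K, ∑ s : 𝒮,
      probS μ s * (1 - Fks μ p k s (lam + γ k s / probS μ s)))) := by
    refine tendsto_finset_sum _ (fun k _ => tendsto_finset_sum _ (fun s _ => ?_))
    have harg : Filter.Tendsto (fun n : ℕ => lam + 1/((n:ℝ)+1) + γ k s / probS μ s)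
        Filter.atTop (nhds (lam + γ k s / probS μ s)) := by
      have := (tendsto_one_div_add_atTop_nhds_zero_nat.const_add lam).add_const
        (γ k s / probS μ s)
      simpa using this
    have hF := ((hA1 k s).tendsto _).comp harg
    have h3 := ((tendsto_const_nhds :
      Filter.Tendsto (fun _ : ℕ => (1:ℝ)) Filter.atTop (nhds 1)).sub hF).const_mul
      (probS μ s)
    simpa using h3
  exact le_of_tendsto' hlim (fun n => key _ (by positivity))


lemma minimizer_size_ge (μ : Measure (𝒳 × 𝒮 × Fin K)) [IsProbabilityMeasure μ]
    (hπ : ∀ s : 𝒮, 0 < probS μ s) (p : Fin K → 𝒳 → 𝒮 → ℝ)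
    (hpmeas : ∀ k, Measurable fun q : 𝒳 × 𝒮 => p k q.1 q.2)
    (hp01 : ∀ k x s, p k x s ∈ Set.Icc (0:ℝ) 1)
    (hA1 : Assumption1 μ p) (β : ℝ)
    (lam : ℝ) (γ : Fin K → 𝒮 → ℝ) (hmem : (lam, γ) ∈ Δset K 𝒮) (hlam : 0 < lam)
    (hmin : ∀ r ∈ Δset K 𝒮, Hfun μ p β lam γ ≤ Hfun μ p β r.1 r.2) :
    β ≤ ∑ k : Fin K, ∑ s : 𝒮, probS μ s * (1 - Fks μ p k s (lam + γ k s / probS μ s)) := by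
  have key : ∀ h : ℝ, 0 < h → h < lam →
      β ≤ ∑ k : Fin K, ∑ s : 𝒮,
        probS μ s * (1 - Fks μ p k s (lam - h + γ k s / probS μ s)) := by
    intro h hh hhl
    have hmem' : ((lam - h, γ) : ℝ × (Fin K → 𝒮 → ℝ)) ∈ Δset K 𝒮 := by
      refine ⟨?_, hmem.2⟩
      show (0:ℝ) ≤ lam - h
      linarith
    have h1 := hmin (lam - h, γ) hmem'
    rw [Hfun_expand, Hfun_expand] at h1
    have h2 : ∀ (k : Fin K) (s : 𝒮),
        (∫ ω in {ω : 𝒳 × 𝒮 × Fin K | ω.2.1 = s},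
          max (probS μ s * (p k ω.1 ω.2.1 - (lam - h)) - γ k s) 0 ∂μ) / probS μ s
        ≤ (∫ ω in {ω : 𝒳 × 𝒮 × Fin K | ω.2.1 = s},
            max (probS μ s * (p k ω.1 ω.2.1 - lam) - γ k s) 0 ∂μ) / probS μ s
          + h * (probS μ s * (1 - Fks μ p k s (lam - h + γ k s / probS μ s))) := by
      intro k s
      have hπs := hπ s
      have hbd := int_max_shift_up μ hπ p hpmeas hp01 k s lam (γ k s) (probS μ s * h)
        (by positivity)
      have heq1 : (fun ω : 𝒳 × 𝒮 × Fin K =>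
          max (probS μ s * (p k ω.1 ω.2.1 - (lam - h)) - γ k s) 0)
          = fun ω => max ((probS μ s * (p k ω.1 ω.2.1 - lam) - γ k s) + probS μ s * h) 0 := by
        funext ω; congr 1; ring
      have heq2 : {ω : 𝒳 × 𝒮 × Fin K |
          -(probS μ s * h) < probS μ s * (p k ω.1 ω.2.1 - lam) - γ k s}
          = {ω : 𝒳 × 𝒮 × Fin K | lam - h + γ k s / probS μ s < p k ω.1 ω.2.1} := by
        rw [set_a_gt μ hπ p k s lam (γ k s) (probS μ s * h)]
        have : lam + (γ k s - probS μ s * h) / probS μ s = lam - h + γ k s / probS μ s := by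
          field_simp
          ring
        rw [this]
      rw [heq1]
      rw [heq2, meas_p_gt μ hπ p hpmeas k s (lam - h + γ k s / probS μ s)] at hbd
      have hdiv := (div_le_div_iff_of_pos_right hπs).mpr hbd
      calc (∫ ω in {ω : 𝒳 × 𝒮 × Fin K | ω.2.1 = s},
            max ((probS μ s * (p k ω.1 ω.2.1 - lam) - γ k s) + probS μ s * h) 0 ∂μ) / probS μ s
          ≤ ((∫ ω in {ω : 𝒳 × 𝒮 × Fin K | ω.2.1 = s},
            max (probS μ s * (p k ω.1 ω.2.1 - lam) - γ k s) 0 ∂μ)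
            + probS μ s * h * (probS μ s *
              (1 - Fks μ p k s (lam - h + γ k s / probS μ s)))) / probS μ s := hdiv
        _ = (∫ ω in {ω : 𝒳 × 𝒮 × Fin K | ω.2.1 = s},
            max (probS μ s * (p k ω.1 ω.2.1 - lam) - γ k s) 0 ∂μ) / probS μ s
          + h * (probS μ s * (1 - Fks μ p k s (lam - h + γ k s / probS μ s))) := by
            field_simp
    have h2' := Finset.sum_le_sum (fun k (_ : k ∈ Finset.univ) =>
      Finset.sum_le_sum (fun s (_ : s ∈ Finset.univ) => h2 k s))
    simp only [Finset.sum_add_distrib, ← Finset.mul_sum] at h2'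
    have hfin : h * β ≤ h * (∑ k : Fin K, ∑ s : 𝒮,
        probS μ s * (1 - Fks μ p k s (lam - h + γ k s / probS μ s))) := by
      linarith
    exact le_of_mul_le_mul_left hfin hh
  have hlim : Filter.Tendsto (fun n : ℕ => ∑ k : Fin K, ∑ s : 𝒮,
      probS μ s * (1 - Fks μ p k s (lam - lam/((n:ℝ)+2) + γ k s / probS μ s)))
      Filter.atTop (nhds (∑ k : Fin K, ∑ s : 𝒮,
      probS μ s * (1 - Fks μ p k s (lam + γ k s / probS μ s)))) := by
    have hseq : Filter.Tendsto (fun n : ℕ => lam/((n:ℝ)+2)) Filter.atTop (nhds 0) := by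
      have h1 : Filter.Tendsto (fun n : ℕ => ((n:ℝ)+2)) Filter.atTop Filter.atTop := by
        apply Filter.tendsto_atTop_add_const_right
        exact tendsto_natCast_atTop_atTop
      simpa using Filter.Tendsto.div_atTop (tendsto_const_nhds (x := lam)) h1
    refine tendsto_finset_sum _ (fun k _ => tendsto_finset_sum _ (fun s _ => ?_))
    have harg : Filter.Tendsto (fun n : ℕ => lam - lam/((n:ℝ)+2) + γ k s / probS μ s)
        Filter.atTop (nhds (lam + γ k s / probS μ s)) := by
      have := (hseq.const_sub lam).add_const (γ k s / probS μ s)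
      simpa using this
    have hF := ((hA1 k s).tendsto _).comp harg
    have h3 := ((tendsto_const_nhds :
      Filter.Tendsto (fun _ : ℕ => (1:ℝ)) Filter.atTop (nhds 1)).sub hF).const_mul
      (probS μ s)
    simpa using h3
  refine ge_of_tendsto' hlim (fun n => key _ ?_ ?_)
  · positivity
  · have hn2 : (1:ℝ) < (n:ℝ) + 2 := by
      have : (0:ℝ) ≤ (n:ℝ) := Nat.cast_nonneg n
      linarith
    calc lam/((n:ℝ)+2) < lam/1 := by
          apply div_lt_div_of_pos_left hlam (by linarith) hn2
      _ = lam := div_one lam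


lemma sum_probS (μ : Measure (𝒳 × 𝒮 × Fin K)) [IsProbabilityMeasure μ] :
    ∑ s : 𝒮, probS μ s = 1 := by
  have h := meas_eq_sum_S μ Set.univ MeasurableSet.univ
  simp only [Set.univ_inter, measure_univ, ENNReal.toReal_one] at h
  simp only [probS]
  exact h.symm

lemma minimizer_F_le (μ : Measure (𝒳 × 𝒮 × Fin K)) [IsProbabilityMeasure μ]
    (hπ : ∀ s : 𝒮, 0 < probS μ s) (p : Fin K → 𝒳 → 𝒮 → ℝ)
    (hpmeas : ∀ k, Measurable fun q : 𝒳 × 𝒮 => p k q.1 q.2)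
    (hp01 : ∀ k x s, p k x s ∈ Set.Icc (0:ℝ) 1)
    (hA1 : Assumption1 μ p) (β : ℝ)
    (lam : ℝ) (γ : Fin K → 𝒮 → ℝ) (hmem : (lam, γ) ∈ Δset K 𝒮)
    (hmin : ∀ r ∈ Δset K 𝒮, Hfun μ p β lam γ ≤ Hfun μ p β r.1 r.2)
    (k : Fin K) (s1 s2 : 𝒮) (hs : s1 ≠ s2) :
    Fks μ p k s2 (lam + γ k s2 / probS μ s2) ≤ Fks μ p k s1 (lam + γ k s1 / probS μ s1) := by
  classical
  have key : ∀ h : ℝ, 0 < h →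
      Fks μ p k s2 (lam + (γ k s2 - h) / probS μ s2)
        ≤ Fks μ p k s1 (lam + (γ k s1 + h) / probS μ s1) := by
    intro h hh
    set γ' : Fin K → 𝒮 → ℝ := fun k' s' =>
      γ k' s' + (if k' = k ∧ s' = s1 then h else 0)
        - (if k' = k ∧ s' = s2 then h else 0) with hγ'
    have hγ'1 : γ' k s1 = γ k s1 + h := by simp [hγ', hs]
    have hγ'2 : γ' k s2 = γ k s2 - h := by simp [hγ', Ne.symm hs]
    have hγ'o : ∀ k' s', (k' = k → s' ≠ s1 ∧ s' ≠ s2) → γ' k' s' = γ k' s' := by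
      intro k' s' hcond
      by_cases hk : k' = k
      · obtain ⟨ha, hb⟩ := hcond hk
        simp [hγ', ha, hb]
      · simp [hγ', hk]
    have hmem' : ((lam, γ') : ℝ × (Fin K → 𝒮 → ℝ)) ∈ Δset K 𝒮 := by
      refine ⟨hmem.1, fun k' => ?_⟩
      have hbase := hmem.2 k'
      simp only [hγ']
      rw [Finset.sum_sub_distrib, Finset.sum_add_distrib, hbase]
      by_cases hk : k' = k
      · subst hk
        simp [hs]
      · simp [hk]
    have h1 := hmin (lam, γ') hmem'
    rw [Hfun_expand, Hfun_expand] at h1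
    set Df : Fin K → 𝒮 → ℝ := fun k' s' =>
      (∫ ω in {ω : 𝒳 × 𝒮 × Fin K | ω.2.1 = s'},
        max (probS μ s' * (p k' ω.1 ω.2.1 - lam) - γ' k' s') 0 ∂μ) / probS μ s'
      - (∫ ω in {ω : 𝒳 × 𝒮 × Fin K | ω.2.1 = s'},
        max (probS μ s' * (p k' ω.1 ω.2.1 - lam) - γ k' s') 0 ∂μ) / probS μ s' with hDf
    have hzero : ∀ k' s', (k' = k → s' ≠ s1 ∧ s' ≠ s2) → Df k' s' = 0 := by
      intro k' s' hcond
      rw [hDf]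
      simp only []
      rw [hγ'o k' s' hcond, sub_self]
    have hDsum : ∑ k' : Fin K, ∑ s' : 𝒮, Df k' s' = Df k s1 + Df k s2 := by
      rw [Finset.sum_eq_single_of_mem k (Finset.mem_univ k) ?oth]
      case oth =>
        intro b _ hb
        exact Finset.sum_eq_zero (fun s' _ => hzero b s' (fun hbk => absurd hbk hb))
      exact Finset.sum_eq_add_of_mem s1 s2 (Finset.mem_univ s1) (Finset.mem_univ s2) hs
        (fun c _ hc => hzero k c (fun _ => ⟨hc.1, hc.2⟩))
    have hD : (0:ℝ) ≤ Df k s1 + Df k s2 := by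
      rw [← hDsum]
      simp only [hDf, Finset.sum_sub_distrib]
      linarith
    have hb1 : Df k s1 ≤ -(h * (1 - Fks μ p k s1 (lam + (γ k s1 + h) / probS μ s1))) := by
      have hπ1 := hπ s1
      have hbd := int_max_shift_down μ hπ p hpmeas hp01 k s1 lam (γ k s1) h hh.le
      have heq2 : {ω : 𝒳 × 𝒮 × Fin K |
          h ≤ probS μ s1 * (p k ω.1 ω.2.1 - lam) - γ k s1}
          = {ω : 𝒳 × 𝒮 × Fin K | lam + (γ k s1 + h) / probS μ s1 ≤ p k ω.1 ω.2.1} :=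
        set_a_ge μ hπ p k s1 lam (γ k s1) h
      rw [heq2, meas_p_ge μ hπ p hpmeas hA1 k s1 (lam + (γ k s1 + h) / probS μ s1)] at hbd
      have heq1 : (fun ω : 𝒳 × 𝒮 × Fin K =>
          max (probS μ s1 * (p k ω.1 ω.2.1 - lam) - γ' k s1) 0)
          = fun ω => max ((probS μ s1 * (p k ω.1 ω.2.1 - lam) - γ k s1) - h) 0 := by
        rw [hγ'1]
        funext ω
        congr 1
        ring
      rw [hDf]
      simp only [heq1]
      have hdiv := (div_le_div_iff_of_pos_right hπ1).mpr hbd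
      calc (∫ ω in {ω : 𝒳 × 𝒮 × Fin K | ω.2.1 = s1},
            max ((probS μ s1 * (p k ω.1 ω.2.1 - lam) - γ k s1) - h) 0 ∂μ) / probS μ s1
            - (∫ ω in {ω : 𝒳 × 𝒮 × Fin K | ω.2.1 = s1},
            max (probS μ s1 * (p k ω.1 ω.2.1 - lam) - γ k s1) 0 ∂μ) / probS μ s1
          ≤ ((∫ ω in {ω : 𝒳 × 𝒮 × Fin K | ω.2.1 = s1},
            max (probS μ s1 * (p k ω.1 ω.2.1 - lam) - γ k s1) 0 ∂μ)
            - h * (probS μ s1 * (1 - Fks μ p k s1 (lam + (γ k s1 + h) / probS μ s1))))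
              / probS μ s1
            - (∫ ω in {ω : 𝒳 × 𝒮 × Fin K | ω.2.1 = s1},
            max (probS μ s1 * (p k ω.1 ω.2.1 - lam) - γ k s1) 0 ∂μ) / probS μ s1 := by
            linarith
        _ = -(h * (1 - Fks μ p k s1 (lam + (γ k s1 + h) / probS μ s1))) := by
            field_simp
            ring
    have hb2 : Df k s2 ≤ h * (1 - Fks μ p k s2 (lam + (γ k s2 - h) / probS μ s2)) := by
      have hπ2 := hπ s2
      have hbd := int_max_shift_up μ hπ p hpmeas hp01 k s2 lam (γ k s2) h hh.le
      have heq2 : {ω : 𝒳 × 𝒮 × Fin K |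
          -h < probS μ s2 * (p k ω.1 ω.2.1 - lam) - γ k s2}
          = {ω : 𝒳 × 𝒮 × Fin K | lam + (γ k s2 - h) / probS μ s2 < p k ω.1 ω.2.1} :=
        set_a_gt μ hπ p k s2 lam (γ k s2) h
      rw [heq2, meas_p_gt μ hπ p hpmeas k s2 (lam + (γ k s2 - h) / probS μ s2)] at hbd
      have heq1 : (fun ω : 𝒳 × 𝒮 × Fin K =>
          max (probS μ s2 * (p k ω.1 ω.2.1 - lam) - γ' k s2) 0)
          = fun ω => max ((probS μ s2 * (p k ω.1 ω.2.1 - lam) - γ k s2) + h) 0 := by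
        rw [hγ'2]
        funext ω
        congr 1
        ring
      rw [hDf]
      simp only [heq1]
      have hdiv := (div_le_div_iff_of_pos_right hπ2).mpr hbd
      calc (∫ ω in {ω : 𝒳 × 𝒮 × Fin K | ω.2.1 = s2},
            max ((probS μ s2 * (p k ω.1 ω.2.1 - lam) - γ k s2) + h) 0 ∂μ) / probS μ s2
            - (∫ ω in {ω : 𝒳 × 𝒮 × Fin K | ω.2.1 = s2},
            max (probS μ s2 * (p k ω.1 ω.2.1 - lam) - γ k s2) 0 ∂μ) / probS μ s2
          ≤ ((∫ ω in {ω : 𝒳 × 𝒮 × Fin K | ω.2.1 = s2},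
            max (probS μ s2 * (p k ω.1 ω.2.1 - lam) - γ k s2) 0 ∂μ)
            + h * (probS μ s2 * (1 - Fks μ p k s2 (lam + (γ k s2 - h) / probS μ s2))))
              / probS μ s2
            - (∫ ω in {ω : 𝒳 × 𝒮 × Fin K | ω.2.1 = s2},
            max (probS μ s2 * (p k ω.1 ω.2.1 - lam) - γ k s2) 0 ∂μ) / probS μ s2 := by
            linarith
        _ = h * (1 - Fks μ p k s2 (lam + (γ k s2 - h) / probS μ s2)) := by
            field_simp
            ring
    have hfin : h * Fks μ p k s2 (lam + (γ k s2 - h) / probS μ s2)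
        ≤ h * Fks μ p k s1 (lam + (γ k s1 + h) / probS μ s1) := by
      have e1 : -(h * (1 - Fks μ p k s1 (lam + (γ k s1 + h) / probS μ s1)))
          = h * Fks μ p k s1 (lam + (γ k s1 + h) / probS μ s1) - h := by ring
      have e2 : h * (1 - Fks μ p k s2 (lam + (γ k s2 - h) / probS μ s2))
          = h - h * Fks μ p k s2 (lam + (γ k s2 - h) / probS μ s2) := by ring
      rw [e1] at hb1
      rw [e2] at hb2
      have hcomb := le_trans hD (add_le_add hb1 hb2)
      linarith [hcomb]
    exact le_of_mul_le_mul_left hfin hh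
  have hlim2 : Filter.Tendsto (fun n : ℕ =>
      Fks μ p k s2 (lam + (γ k s2 - 1/((n:ℝ)+1)) / probS μ s2)) Filter.atTop
      (nhds (Fks μ p k s2 (lam + γ k s2 / probS μ s2))) := by
    have harg : Filter.Tendsto (fun n : ℕ => lam + (γ k s2 - 1/((n:ℝ)+1)) / probS μ s2)
        Filter.atTop (nhds (lam + γ k s2 / probS μ s2)) := by
      have h0 := (tendsto_one_div_add_atTop_nhds_zero_nat.div_const (probS μ s2))
      have h1 := ((tendsto_const_nhds :
        Filter.Tendsto (fun _ : ℕ => lam + γ k s2 / probS μ s2) Filter.atTop _).sub h0)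
      rw [show lam + γ k s2 / probS μ s2 - 0 / probS μ s2
        = lam + γ k s2 / probS μ s2 from by ring] at h1
      refine h1.congr (fun n => ?_)
      ring
    exact ((hA1 k s2).tendsto _).comp harg
  have hlim1 : Filter.Tendsto (fun n : ℕ =>
      Fks μ p k s1 (lam + (γ k s1 + 1/((n:ℝ)+1)) / probS μ s1)) Filter.atTop
      (nhds (Fks μ p k s1 (lam + γ k s1 / probS μ s1))) := by
    have harg : Filter.Tendsto (fun n : ℕ => lam + (γ k s1 + 1/((n:ℝ)+1)) / probS μ s1)
        Filter.atTop (nhds (lam + γ k s1 / probS μ s1)) := by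
      have h0 := (tendsto_one_div_add_atTop_nhds_zero_nat.div_const (probS μ s1))
      have h1 := ((tendsto_const_nhds :
        Filter.Tendsto (fun _ : ℕ => lam + γ k s1 / probS μ s1) Filter.atTop _).add h0)
      rw [show lam + γ k s1 / probS μ s1 + 0 / probS μ s1
        = lam + γ k s1 / probS μ s1 from by ring] at h1
      refine h1.congr (fun n => ?_)
      ring
    exact ((hA1 k s1).tendsto _).comp harg
  exact le_of_tendsto_of_tendsto' hlim2 hlim1 (fun n => key _ (by positivity))

lemma minimizer_F_eq (μ : Measure (𝒳 × 𝒮 × Fin K)) [IsProbabilityMeasure μ]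
    (hπ : ∀ s : 𝒮, 0 < probS μ s) (p : Fin K → 𝒳 → 𝒮 → ℝ)
    (hpmeas : ∀ k, Measurable fun q : 𝒳 × 𝒮 => p k q.1 q.2)
    (hp01 : ∀ k x s, p k x s ∈ Set.Icc (0:ℝ) 1)
    (hA1 : Assumption1 μ p) (β : ℝ)
    (lam : ℝ) (γ : Fin K → 𝒮 → ℝ) (hmem : (lam, γ) ∈ Δset K 𝒮)
    (hmin : ∀ r ∈ Δset K 𝒮, Hfun μ p β lam γ ≤ Hfun μ p β r.1 r.2)
    (k : Fin K) (s1 s2 : 𝒮) :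
    Fks μ p k s1 (lam + γ k s1 / probS μ s1) = Fks μ p k s2 (lam + γ k s2 / probS μ s2) := by
  by_cases hs : s1 = s2
  · rw [hs]
  · exact le_antisymm
      (minimizer_F_le μ hπ p hpmeas hp01 hA1 β lam γ hmem hmin k s2 s1 (Ne.symm hs))
      (minimizer_F_le μ hπ p hpmeas hp01 hA1 β lam γ hmem hmin k s1 s2 hs)

lemma minimizer_DPfair (μ : Measure (𝒳 × 𝒮 × Fin K)) [IsProbabilityMeasure μ]
    (hπ : ∀ s : 𝒮, 0 < probS μ s) (p : Fin K → 𝒳 → 𝒮 → ℝ)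
    (hpmeas : ∀ k, Measurable fun q : 𝒳 × 𝒮 => p k q.1 q.2)
    (hp01 : ∀ k x s, p k x s ∈ Set.Icc (0:ℝ) 1)
    (hA1 : Assumption1 μ p) (β : ℝ)
    (lam : ℝ) (γ : Fin K → 𝒮 → ℝ) (hmem : (lam, γ) ∈ Δset K 𝒮)
    (hmin : ∀ r ∈ Δset K 𝒮, Hfun μ p β lam γ ≤ Hfun μ p β r.1 r.2) :
    DPfair μ (oracle μ p lam γ) := by
  intro k s
  have hcl := isClassifier_oracle μ p hpmeas lam γ
  rw [condProb_oracle μ hπ p hpmeas hA1 lam γ k s,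
    meas_eq_sum_S μ _ (measMemEvent hcl k)]
  have hterm : ∀ s' : 𝒮, (μ (memEvent (oracle μ p lam γ) k ∩ {ω | ω.2.1 = s'})).toReal
      = probS μ s' * (1 - Fks μ p k s (lam + γ k s / probS μ s)) := by
    intro s'
    rw [meas_oracle_inter μ hπ p hpmeas hA1 lam γ k s',
      minimizer_F_eq μ hπ p hpmeas hp01 hA1 β lam γ hmem hmin k s' s]
  rw [Finset.sum_congr rfl (fun s' _ => hterm s'), ← Finset.sum_mul, sum_probS μ, one_mul]


lemma J_nonneg (μ : Measure (𝒳 × 𝒮 × Fin K)) (hπ : ∀ s : 𝒮, 0 < probS μ s)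
    (p : Fin K → 𝒳 → 𝒮 → ℝ) (k : Fin K) (s : 𝒮) (lam d : ℝ) :
    0 ≤ (∫ ω in {ω : 𝒳 × 𝒮 × Fin K | ω.2.1 = s},
      max (probS μ s * (p k ω.1 ω.2.1 - lam) - d) 0 ∂μ) / probS μ s :=
  div_nonneg (setIntegral_nonneg (measSs s) (fun ω _ => le_max_right _ _)) (hπ s).le

lemma J_ge (μ : Measure (𝒳 × 𝒮 × Fin K)) [IsProbabilityMeasure μ]
    (hπ : ∀ s : 𝒮, 0 < probS μ s) (p : Fin K → 𝒳 → 𝒮 → ℝ)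
    (hpmeas : ∀ k, Measurable fun q : 𝒳 × 𝒮 => p k q.1 q.2)
    (hp01 : ∀ k x s, p k x s ∈ Set.Icc (0:ℝ) 1)
    (k : Fin K) (s : 𝒮) (lam d : ℝ) (hlam : 0 ≤ lam) :
    -lam - d ≤ (∫ ω in {ω : 𝒳 × 𝒮 × Fin K | ω.2.1 = s},
      max (probS μ s * (p k ω.1 ω.2.1 - lam) - d) 0 ∂μ) / probS μ s := by
  have hπs := hπ s
  have hπ1 := probS_le_one μ s
  have hpm : Measurable fun ω : 𝒳 × 𝒮 × Fin K => p k ω.1 ω.2.1 :=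
    (hpmeas k).comp measurable_projXS
  have hpi : Integrable (fun ω : 𝒳 × 𝒮 × Fin K => p k ω.1 ω.2.1) μ := by
    refine integrable_of_bdd μ hpm 1 (fun ω => ?_)
    have h := hp01 k ω.1 ω.2.1
    rw [Set.mem_Icc] at h
    rw [abs_le]
    exact ⟨by linarith [h.1], h.2⟩
  have hIa := integrable_a μ p hpmeas hp01 (probS μ s) lam d k hπs.le hπ1
  have h1 : ∫ ω in {ω : 𝒳 × 𝒮 × Fin K | ω.2.1 = s},
      (probS μ s * (p k ω.1 ω.2.1 - lam) - d) ∂μ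
      ≤ ∫ ω in {ω : 𝒳 × 𝒮 × Fin K | ω.2.1 = s},
      max (probS μ s * (p k ω.1 ω.2.1 - lam) - d) 0 ∂μ :=
    setIntegral_mono hIa.integrableOn hIa.pos_part.integrableOn (fun ω => le_max_left _ _)
  have h2 : ∫ ω in {ω : 𝒳 × 𝒮 × Fin K | ω.2.1 = s},
      (probS μ s * (p k ω.1 ω.2.1 - lam) - d) ∂μ
      = probS μ s * (∫ ω in {ω : 𝒳 × 𝒮 × Fin K | ω.2.1 = s}, p k ω.1 ω.2.1 ∂μ)
        - (probS μ s * lam + d) * probS μ s := by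
    have h0 : (fun ω : 𝒳 × 𝒮 × Fin K => probS μ s * (p k ω.1 ω.2.1 - lam) - d)
        = fun ω => probS μ s * (p k ω.1 ω.2.1) - (probS μ s * lam + d) := by
      funext ω; ring
    rw [h0, setint_affine μ hpi _ _ _]
    rfl
  have h3 : 0 ≤ ∫ ω in {ω : 𝒳 × 𝒮 × Fin K | ω.2.1 = s}, p k ω.1 ω.2.1 ∂μ :=
    setIntegral_nonneg (measSs s) (fun ω _ => (hp01 k ω.1 ω.2.1).1)
  have h4 : -(probS μ s * lam + d) * probS μ s
      ≤ ∫ ω in {ω : 𝒳 × 𝒮 × Fin K | ω.2.1 = s},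
        max (probS μ s * (p k ω.1 ω.2.1 - lam) - d) 0 ∂μ := by
    nlinarith
  have h5 := (div_le_div_iff_of_pos_right hπs).mpr h4
  rw [show (-(probS μ s * lam + d) * probS μ s) / probS μ s
    = -(probS μ s * lam + d) from by field_simp] at h5
  have h6 : -lam - d ≤ -(probS μ s * lam + d) := by nlinarith
  linarith

lemma continuous_Hfun (μ : Measure (𝒳 × 𝒮 × Fin K)) [IsProbabilityMeasure μ]
    (p : Fin K → 𝒳 → 𝒮 → ℝ)
    (hπ : ∀ s : 𝒮, 0 < probS μ s)
    (hpmeas : ∀ k, Measurable fun q : 𝒳 × 𝒮 => p k q.1 q.2)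
    (hp01 : ∀ k x s, p k x s ∈ Set.Icc (0:ℝ) 1)
    (β : ℝ) :
    Continuous (fun q : ℝ × (Fin K → 𝒮 → ℝ) => Hfun μ p β q.1 q.2) := by
  have hterm : ∀ (k : Fin K) (s : 𝒮), Continuous (fun q : ℝ × (Fin K → 𝒮 → ℝ) =>
      (∫ ω in {ω : 𝒳 × 𝒮 × Fin K | ω.2.1 = s},
        max (probS μ s * (p k ω.1 ω.2.1 - q.1) - q.2 k s) 0 ∂μ) / probS μ s) := by
    intro k s
    refine Continuous.div_const ?_ _
    have hlip : LipschitzWith 2 (fun q : ℝ × (Fin K → 𝒮 → ℝ) =>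
        ∫ ω in {ω : 𝒳 × 𝒮 × Fin K | ω.2.1 = s},
          max (probS μ s * (p k ω.1 ω.2.1 - q.1) - q.2 k s) 0 ∂μ) := by
      refine LipschitzWith.of_dist_le_mul (fun q q' => ?_)
      have hπs := hπ s
      have hπ1 := probS_le_one μ s
      have hIq := (integrable_a μ p hpmeas hp01 (probS μ s) q.1 (q.2 k s) k
        hπs.le hπ1).pos_part
      have hIq' := (integrable_a μ p hpmeas hp01 (probS μ s) q'.1 (q'.2 k s) k
        hπs.le hπ1).pos_part
      have hd1 : dist q.1 q'.1 ≤ dist q q' := by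
        rw [Prod.dist_eq]; exact le_max_left _ _
      have hd2 : dist (q.2 k s) (q'.2 k s) ≤ dist q q' := by
        calc dist (q.2 k s) (q'.2 k s) ≤ dist (q.2 k) (q'.2 k) := dist_le_pi_dist _ _ s
          _ ≤ dist q.2 q'.2 := dist_le_pi_dist _ _ k
          _ ≤ dist q q' := by rw [Prod.dist_eq]; exact le_max_right _ _
      have hbound : ∀ ω : 𝒳 × 𝒮 × Fin K,
          ‖max (probS μ s * (p k ω.1 ω.2.1 - q.1) - q.2 k s) 0
            - max (probS μ s * (p k ω.1 ω.2.1 - q'.1) - q'.2 k s) 0‖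
          ≤ 2 * dist q q' := by
        intro ω
        rw [Real.norm_eq_abs]
        calc |max (probS μ s * (p k ω.1 ω.2.1 - q.1) - q.2 k s) 0
            - max (probS μ s * (p k ω.1 ω.2.1 - q'.1) - q'.2 k s) 0|
            ≤ |(probS μ s * (p k ω.1 ω.2.1 - q.1) - q.2 k s)
              - (probS μ s * (p k ω.1 ω.2.1 - q'.1) - q'.2 k s)| :=
              abs_max_sub_max_le_abs _ _ _
          _ = |probS μ s * (q'.1 - q.1) + (q'.2 k s - q.2 k s)| := by
              rw [show (probS μ s * (p k ω.1 ω.2.1 - q.1) - q.2 k s)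
                - (probS μ s * (p k ω.1 ω.2.1 - q'.1) - q'.2 k s)
                = probS μ s * (q'.1 - q.1) + (q'.2 k s - q.2 k s) from by ring]
          _ ≤ probS μ s * |q'.1 - q.1| + |q'.2 k s - q.2 k s| := by
              calc |probS μ s * (q'.1 - q.1) + (q'.2 k s - q.2 k s)|
                  ≤ |probS μ s * (q'.1 - q.1)| + |q'.2 k s - q.2 k s| := abs_add_le _ _
                _ = probS μ s * |q'.1 - q.1| + |q'.2 k s - q.2 k s| := by
                    rw [abs_mul, abs_of_nonneg hπs.le]
          _ ≤ 1 * dist q q' + dist q q' := by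
              have b1 : |q'.1 - q.1| ≤ dist q q' := by
                rw [abs_sub_comm, ← Real.dist_eq]
                exact hd1
              have b2 : |q'.2 k s - q.2 k s| ≤ dist q q' := by
                rw [abs_sub_comm, ← Real.dist_eq]
                exact hd2
              have b3 := mul_le_mul hπ1 b1 (abs_nonneg _) (by norm_num : (0:ℝ) ≤ 1)
              linarith
          _ = 2 * dist q q' := by ring
      have hnorm := norm_integral_le_of_norm_le_const (μ :=
        μ.restrict {ω : 𝒳 × 𝒮 × Fin K | ω.2.1 = s})
        (f := fun ω : 𝒳 × 𝒮 × Fin K =>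
          max (probS μ s * (p k ω.1 ω.2.1 - q.1) - q.2 k s) 0
          - max (probS μ s * (p k ω.1 ω.2.1 - q'.1) - q'.2 k s) 0)
        (C := 2 * dist q q') (Filter.Eventually.of_forall hbound)
      rw [integral_sub hIq.integrableOn hIq'.integrableOn] at hnorm
      rw [Real.dist_eq]
      calc |(∫ ω in {ω : 𝒳 × 𝒮 × Fin K | ω.2.1 = s},
            max (probS μ s * (p k ω.1 ω.2.1 - q.1) - q.2 k s) 0 ∂μ)
          - ∫ ω in {ω : 𝒳 × 𝒮 × Fin K | ω.2.1 = s},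
            max (probS μ s * (p k ω.1 ω.2.1 - q'.1) - q'.2 k s) 0 ∂μ|
          ≤ 2 * dist q q' * (μ.restrict {ω : 𝒳 × 𝒮 × Fin K | ω.2.1 = s} Set.univ).toReal := by
            rw [← Real.norm_eq_abs]
            exact hnorm
        _ ≤ ((2 : NNReal) : ℝ) * dist q q' := by
            rw [Measure.restrict_apply_univ]
            have h1 : (μ {ω : 𝒳 × 𝒮 × Fin K | ω.2.1 = s}).toReal ≤ 1 := probS_le_one μ s
            have h2 : (0:ℝ) ≤ 2 * dist q q' := by positivity
            have h3 : ((2 : NNReal) : ℝ) = 2 := by norm_num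
            rw [h3]
            nlinarith [mul_le_mul_of_nonneg_left h1 h2]
    exact hlip.continuous
  have h1 : Continuous (fun q : ℝ × (Fin K → 𝒮 → ℝ) => ∑ k : Fin K, ∑ s : 𝒮,
      (∫ ω in {ω : 𝒳 × 𝒮 × Fin K | ω.2.1 = s},
        max (probS μ s * (p k ω.1 ω.2.1 - q.1) - q.2 k s) 0 ∂μ) / probS μ s) :=
    continuous_finset_sum _ (fun k _ => continuous_finset_sum _ (fun s _ => hterm k s))
  have h2 : Continuous (fun q : ℝ × (Fin K → 𝒮 → ℝ) => q.1 * β) :=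
    continuous_fst.mul continuous_const
  have := h1.add h2
  convert this using 2
  exact Hfun_expand μ p β _ _


lemma exists_minimizer (μ : Measure (𝒳 × 𝒮 × Fin K)) [IsProbabilityMeasure μ] [Nonempty 𝒮]
    (hπ : ∀ s : 𝒮, 0 < probS μ s) (p : Fin K → 𝒳 → 𝒮 → ℝ)
    (hpmeas : ∀ k, Measurable fun q : 𝒳 × 𝒮 => p k q.1 q.2)
    (hp01 : ∀ k x s, p k x s ∈ Set.Icc (0:ℝ) 1)
    (β : ℝ) (hβ0 : 0 < β) :
    ∃ q ∈ Δset K 𝒮, ∀ r ∈ Δset K 𝒮, Hfun μ p β q.1 q.2 ≤ Hfun μ p β r.1 r.2 := by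
  classical
  have hcont := continuous_Hfun μ p hπ hpmeas hp01 β
  have hq0mem : ((0, fun _ _ => 0) : ℝ × (Fin K → 𝒮 → ℝ)) ∈ Δset K 𝒮 :=
    ⟨le_refl 0, fun k => by simp⟩
  set C0 : ℝ := Hfun μ p β 0 (fun _ _ => 0) with hC0
  have hsumJnn : ∀ (lam : ℝ) (γ : Fin K → 𝒮 → ℝ), 0 ≤ ∑ k : Fin K, ∑ s : 𝒮,
      (∫ ω in {ω : 𝒳 × 𝒮 × Fin K | ω.2.1 = s},
        max (probS μ s * (p k ω.1 ω.2.1 - lam) - γ k s) 0 ∂μ) / probS μ s :=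
    fun lam γ => Finset.sum_nonneg (fun k _ => Finset.sum_nonneg
      (fun s _ => J_nonneg μ hπ p k s lam (γ k s)))
  have hHge : ∀ q : ℝ × (Fin K → 𝒮 → ℝ), q.1 * β ≤ Hfun μ p β q.1 q.2 := by
    intro q
    rw [Hfun_expand]
    linarith [hsumJnn q.1 q.2]
  have hC0nonneg : 0 ≤ C0 := by
    have := hHge (0, fun _ _ => 0)
    simpa using this
  set B0 : ℝ := C0 / β + C0 with hB0
  have hB0nonneg : 0 ≤ B0 := by
    have : 0 ≤ C0 / β := div_nonneg hC0nonneg hβ0.le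
    rw [hB0]
    linarith
  set B1 : ℝ := (Fintype.card 𝒮 : ℝ) * B0 with hB1
  have hcard1 : (1:ℝ) ≤ (Fintype.card 𝒮 : ℝ) := by
    have := Fintype.card_pos (α := 𝒮)
    exact_mod_cast this
  have hB01 : B0 ≤ B1 := by
    rw [hB1]
    nlinarith
  have hbox : ∀ q ∈ Δset K 𝒮, Hfun μ p β q.1 q.2 ≤ C0 →
      q ∈ (Set.Icc (0:ℝ) (C0/β)) ×ˢ
        (Set.univ.pi fun _ : Fin K => Set.univ.pi fun _ : 𝒮 => Set.Icc (-B1) B1) := by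
    intro q hq hHq
    have hlam0 : 0 ≤ q.1 := hq.1
    have hlamle : q.1 ≤ C0 / β := by
      rw [le_div_iff₀ hβ0]
      linarith [hHge q]
    have hγlow : ∀ (k : Fin K) (s : 𝒮), -B0 ≤ q.2 k s := by
      intro k s
      have hJle : (∫ ω in {ω : 𝒳 × 𝒮 × Fin K | ω.2.1 = s},
          max (probS μ s * (p k ω.1 ω.2.1 - q.1) - q.2 k s) 0 ∂μ) / probS μ s ≤ C0 := by
        have h1 : (∫ ω in {ω : 𝒳 × 𝒮 × Fin K | ω.2.1 = s},
            max (probS μ s * (p k ω.1 ω.2.1 - q.1) - q.2 k s) 0 ∂μ) / probS μ s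
            ≤ ∑ s' : 𝒮, (∫ ω in {ω : 𝒳 × 𝒮 × Fin K | ω.2.1 = s'},
            max (probS μ s' * (p k ω.1 ω.2.1 - q.1) - q.2 k s') 0 ∂μ) / probS μ s' :=
          Finset.single_le_sum (fun s' _ => J_nonneg μ hπ p k s' q.1 (q.2 k s'))
            (Finset.mem_univ s)
        have h2 : (∑ s' : 𝒮, (∫ ω in {ω : 𝒳 × 𝒮 × Fin K | ω.2.1 = s'},
            max (probS μ s' * (p k ω.1 ω.2.1 - q.1) - q.2 k s') 0 ∂μ) / probS μ s')
            ≤ ∑ k' : Fin K, ∑ s' : 𝒮, (∫ ω in {ω : 𝒳 × 𝒮 × Fin K | ω.2.1 = s'},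
            max (probS μ s' * (p k' ω.1 ω.2.1 - q.1) - q.2 k' s') 0 ∂μ) / probS μ s' :=
          Finset.single_le_sum (f := fun k' => ∑ s' : 𝒮,
            (∫ ω in {ω : 𝒳 × 𝒮 × Fin K | ω.2.1 = s'},
            max (probS μ s' * (p k' ω.1 ω.2.1 - q.1) - q.2 k' s') 0 ∂μ) / probS μ s')
            (fun k' _ => Finset.sum_nonneg (fun s' _ => J_nonneg μ hπ p k' s' q.1 (q.2 k' s')))
            (Finset.mem_univ k)
        have h3 := hHq
        rw [Hfun_expand] at h3
        nlinarith [mul_nonneg hlam0 hβ0.le]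
      have hJge := J_ge μ hπ p hpmeas hp01 k s q.1 (q.2 k s) hlam0
      have : -q.1 - q.2 k s ≤ C0 := le_trans hJge hJle
      have hlam' : q.1 ≤ C0 / β := hlamle
      rw [hB0]
      linarith
    have hγhigh : ∀ (k : Fin K) (s : 𝒮), q.2 k s ≤ B1 := by
      intro k s
      have hsum0 := hq.2 k
      have hsplit : q.2 k s + ∑ s' ∈ Finset.univ.erase s, q.2 k s' = 0 := by
        rw [Finset.add_sum_erase Finset.univ (q.2 k) (Finset.mem_univ s)]
        exact hsum0
      have hlow : ∀ s' ∈ Finset.univ.erase s, -B0 ≤ q.2 k s' :=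
        fun s' _ => hγlow k s'
      have hsumlow : ((Finset.univ.erase s).card : ℝ) * (-B0)
          ≤ ∑ s' ∈ Finset.univ.erase s, q.2 k s' := by
        have := Finset.card_nsmul_le_sum (Finset.univ.erase s) (q.2 k) (-B0) hlow
        simpa [nsmul_eq_mul] using this
      have hcardle : ((Finset.univ.erase s).card : ℝ) ≤ (Fintype.card 𝒮 : ℝ) := by
        have := Finset.card_le_card (Finset.erase_subset s Finset.univ)
        exact_mod_cast this
      have : q.2 k s = -∑ s' ∈ Finset.univ.erase s, q.2 k s' := by linarith
      rw [this, hB1]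
      nlinarith
    refine ⟨⟨hlam0, hlamle⟩, ?_⟩
    intro k _
    intro s _
    exact ⟨le_trans (by linarith [hB01] : -B1 ≤ -B0) (hγlow k s), hγhigh k s⟩
  have hKcomp : IsCompact ((Set.Icc (0:ℝ) (C0/β)) ×ˢ
      (Set.univ.pi fun _ : Fin K => Set.univ.pi fun _ : 𝒮 => Set.Icc (-B1) B1)) :=
    (isCompact_Icc).prod (isCompact_univ_pi fun _ =>
      isCompact_univ_pi fun _ => isCompact_Icc)
  have hΔclosed : IsClosed (Δset K 𝒮) := by
    have hset : Δset K 𝒮 = {q : ℝ × (Fin K → 𝒮 → ℝ) | 0 ≤ q.1}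
        ∩ ⋂ k : Fin K, {q : ℝ × (Fin K → 𝒮 → ℝ) | ∑ s : 𝒮, q.2 k s = 0} := by
      ext q
      simp [Δset, Set.mem_iInter]
    rw [hset]
    refine (isClosed_le continuous_const continuous_fst).inter
      (isClosed_iInter fun k => isClosed_eq ?_ continuous_const)
    exact continuous_finset_sum _ fun s _ =>
      (continuous_apply s).comp ((continuous_apply k).comp continuous_snd)
  have hAclosed : IsClosed (Δset K 𝒮 ∩ {q : ℝ × (Fin K → 𝒮 → ℝ) |
      Hfun μ p β q.1 q.2 ≤ C0}) :=
    hΔclosed.inter (isClosed_le hcont continuous_const)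
  have hAcomp : IsCompact (Δset K 𝒮 ∩ {q : ℝ × (Fin K → 𝒮 → ℝ) |
      Hfun μ p β q.1 q.2 ≤ C0}) :=
    hKcomp.of_isClosed_subset hAclosed (fun q hq => hbox q hq.1 hq.2)
  have hAne : (Δset K 𝒮 ∩ {q : ℝ × (Fin K → 𝒮 → ℝ) |
      Hfun μ p β q.1 q.2 ≤ C0}).Nonempty :=
    ⟨(0, fun _ _ => 0), hq0mem,
      show Hfun μ p β 0 (fun _ _ => 0) ≤ C0 from le_of_eq hC0.symm⟩
  obtain ⟨qm, hqmA, hqmmin'⟩ := hAcomp.exists_isMinOn hAne hcont.continuousOn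
  have hqmmin : ∀ r ∈ (Δset K 𝒮 ∩ {q : ℝ × (Fin K → 𝒮 → ℝ) |
      Hfun μ p β q.1 q.2 ≤ C0}), Hfun μ p β qm.1 qm.2 ≤ Hfun μ p β r.1 r.2 :=
    fun r hr => hqmmin' hr
  refine ⟨qm, hqmA.1, fun r hr => ?_⟩
  by_cases hrC : Hfun μ p β r.1 r.2 ≤ C0
  · exact hqmmin r ⟨hr, hrC⟩
  · push_neg at hrC
    exact le_trans (hqmmin (0, fun _ _ => 0) ⟨hq0mem,
      show Hfun μ p β 0 (fun _ _ => 0) ≤ C0 from le_of_eq hC0.symm⟩) (le_of_lt hrC)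

end Aux

theorem statement1
    {𝒳 𝒮 : Type*} [MeasurableSpace 𝒳] [MeasurableSpace 𝒮] [MeasurableSingletonClass 𝒮]
    [Fintype 𝒮] [Nonempty 𝒮] {K : ℕ} (hK : 2 ≤ K)
    (μ : Measure (𝒳 × 𝒮 × Fin K)) (hμ : IsProbabilityMeasure μ)
    (hπ : ∀ s : 𝒮, 0 < probS μ s)
    (p : Fin K → 𝒳 → 𝒮 → ℝ)
    (hpmeas : ∀ k, Measurable fun q : 𝒳 × 𝒮 => p k q.1 q.2)
    (hp01 : ∀ k x s, p k x s ∈ Icc (0:ℝ) 1)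
    (hpsum : ∀ x s, ∑ k : Fin K, p k x s = 1)
    (hlink : ∀ (k : Fin K) (A : Set (𝒳 × 𝒮)), MeasurableSet A →
      (μ {ω | ω.2.2 = k ∧ (ω.1, ω.2.1) ∈ A}).toReal
        = ∫ ω in {ω : 𝒳 × 𝒮 × Fin K | (ω.1, ω.2.1) ∈ A}, p k ω.1 ω.2.1 ∂μ)
    (β : ℝ) (hβ0 : 0 < β) (hβK : β < (K : ℝ))
    (hA1 : Assumption1 μ p) :
    (∃ q ∈ Δset K 𝒮, ∀ r ∈ Δset K 𝒮, Hfun μ p β q.1 q.2 ≤ Hfun μ p β r.1 r.2) ∧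
    (∀ (lam : ℝ) (γ : Fin K → 𝒮 → ℝ), (lam, γ) ∈ Δset K 𝒮 →
      (∀ r ∈ Δset K 𝒮, Hfun μ p β lam γ ≤ Hfun μ p β r.1 r.2) →
      DPfair μ (oracle μ p lam γ) ∧ expSize μ (oracle μ p lam γ) ≤ β ∧
        ∀ Γ : 𝒳 → 𝒮 → Set (Fin K), IsClassifier Γ → DPfair μ Γ → expSize μ Γ ≤ β →
          risk μ (oracle μ p lam γ) ≤ risk μ Γ) := by
  constructor
  · exact exists_minimizer μ hπ p hpmeas hp01 β hβ0
  · intro lam γ hmem hmin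
    have hfair := minimizer_DPfair μ hπ p hpmeas hp01 hA1 β lam γ hmem hmin
    have hsize_le : expSize μ (oracle μ p lam γ) ≤ β := by
      rw [expSize_oracle μ hπ p hpmeas hA1 lam γ]
      exact minimizer_size_le μ hπ p hpmeas hp01 hA1 β hβ0 lam γ hmem hmin
    refine ⟨hfair, hsize_le, ?_⟩
    intro Γ hΓ hfairΓ hsizeΓ
    have hlam0 : 0 ≤ lam := hmem.1
    have hγ0 : ∀ (Γ' : 𝒳 → 𝒮 → Set (Fin K)), DPfair μ Γ' →
        (∑ k : Fin K, ∑ s : 𝒮, γ k s * condProb μ (memEvent Γ' k) s) = 0 := by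
      intro Γ' hf
      refine Finset.sum_eq_zero (fun k _ => ?_)
      calc ∑ s : 𝒮, γ k s * condProb μ (memEvent Γ' k) s
          = ∑ s : 𝒮, γ k s * (μ (memEvent Γ' k)).toReal :=
            Finset.sum_congr rfl (fun s _ => by rw [hf k s])
        _ = (∑ s : 𝒮, γ k s) * (μ (memEvent Γ' k)).toReal := (Finset.sum_mul _ _ _).symm
        _ = 0 := by rw [hmem.2 k, zero_mul]
    have hcs : lam * (expSize μ (oracle μ p lam γ) - β) = 0 := by
      rcases eq_or_lt_of_le hlam0 with h0 | h0
      · rw [← h0]; ring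
      · have hge := minimizer_size_ge μ hπ p hpmeas hp01 hA1 β lam γ hmem h0 hmin
        have heq : expSize μ (oracle μ p lam γ) = β := by
          refine le_antisymm hsize_le ?_
          rw [expSize_oracle μ hπ p hpmeas hA1 lam γ]
          exact hge
        rw [heq]
        ring
    have horacle_eq : risk μ (oracle μ p lam γ) = 1 - Hfun μ p β lam γ := by
      have h3 := lagRisk_oracle μ hπ p hpmeas hp01 hlink β lam γ
      unfold lagRisk at h3
      rw [hγ0 (oracle μ p lam γ) hfair, hcs] at h3
      linarith
    have h2 := lagRisk_ge μ hπ p hpmeas hp01 hlink β lam γ hΓ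
    have h1 : lagRisk μ β lam γ Γ ≤ risk μ Γ := by
      unfold lagRisk
      rw [hγ0 Γ hfairΓ, add_zero]
      have hneg : lam * (expSize μ Γ - β) ≤ 0 :=
        mul_nonpos_of_nonneg_of_nonpos hlam0 (by linarith)
      linarith
    rw [horacle_eq]
    linarith

end
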